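/- arXiv:2405.18557 — 10 statements merged into one kernel-verified Lean document; each statement's English description precedes it below -/
import Mathlib

section
/- Let p₁, p₂, p₃ ≥ 1 and q₁, q₂, q₃ be integers with gcd(pᵢ, qᵢ) = 1 for i = 1, 2, 3, and set D := q₁p₂p₃ + p₁q₂p₃ + p₁p₂q₃. Let V be the quotient of the 𝔽₂-vector space (ZMod 2)³ by the span of the mod-2 reductions of the vectors (q₁, p₁, 0), (q₂, 0, p₂), (q₃, −p₃, −p₃). Then Nat.card V = 4 if 2 divides each of p₁, p₂, p₃; Nat.card V = 2 if 2 divides D but 2 does not divide all three of p₁, p₂, p₃; and Nat.card V = 1 otherwise. -/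
open Matrix in
lemma quot_card_eq_ker_card (M : Matrix (Fin 3) (Fin 3) (ZMod 2)) :
    Nat.card ((Fin 3 → ZMod 2) ⧸ Submodule.span (ZMod 2) (Set.range M)) =
    Fintype.card {x : Fin 3 → ZMod 2 // Matrix.vecMul x M = 0} := by
  rw [show Set.range M = Set.range M.row from rfl, ← range_vecMulLinear]
  have h1 := Submodule.card_eq_card_quotient_mul_card (LinearMap.range M.vecMulLinear)
  have h2 := Submodule.card_eq_card_quotient_mul_card (LinearMap.ker M.vecMulLinear)
  have e1 : Nat.card ((Fin 3 → ZMod 2) ⧸ LinearMap.ker M.vecMulLinear)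
      = Nat.card (LinearMap.range M.vecMulLinear) :=
    Nat.card_congr (LinearMap.quotKerEquivRange M.vecMulLinear).toEquiv
  have e2 : Nat.card (LinearMap.ker M.vecMulLinear)
      = Fintype.card {x : Fin 3 → ZMod 2 // Matrix.vecMul x M = 0} := by
    rw [← Nat.card_eq_fintype_card]
    exact Nat.card_congr (Equiv.subtypeEquivRight (fun x => by
      simp [LinearMap.mem_ker, Matrix.vecMulLinear_apply]))
  rw [e1] at h2
  have hpos : 0 < Nat.card (LinearMap.range M.vecMulLinear) := Nat.card_pos
  rw [h1, mul_comm] at h2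
  rw [← e2]
  exact Nat.eq_of_mul_eq_mul_right hpos h2

lemma cases_lemma : ∀ (a₁ a₂ a₃ b₁ b₂ b₃ : ZMod 2), ¬(a₁=0 ∧ b₁=0) → ¬(a₂=0 ∧ b₂=0) → ¬(a₃=0 ∧ b₃=0) →
    Fintype.card {x : Fin 3 → ZMod 2 // Matrix.vecMul x ![![b₁,a₁,0],![b₂,0,a₂],![b₃,-a₃,-a₃]] = 0} =
    if a₁ = 0 ∧ a₂ = 0 ∧ a₃ = 0 then 4 else if b₁*a₂*a₃ + a₁*b₂*a₃ + a₁*a₂*b₃ = 0 then 2 else 1 := by decide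

lemma not_both (p q : ℤ) (h : Int.gcd p q = 1) : ¬((p : ZMod 2) = 0 ∧ (q : ZMod 2) = 0) := by
  rintro ⟨h1, h2⟩
  rw [ZMod.intCast_zmod_eq_zero_iff_dvd] at h1 h2
  have : (2:ℕ) ∣ Int.gcd p q := Nat.dvd_gcd
    (Int.natAbs_dvd_natAbs.mpr (by exact_mod_cast h1))
    (Int.natAbs_dvd_natAbs.mpr (by exact_mod_cast h2))
  rw [h] at this
  omega

/-- The cardinality of the quotient of `(ZMod 2)³` by the span of the mod-2 reductions of
`(q₁, p₁, 0)`, `(q₂, 0, p₂)`, `(q₃, -p₃, -p₃)` is `4` if `2` divides all of `p₁, p₂, p₃`,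
`2` if `2` divides `D := q₁p₂p₃ + p₁q₂p₃ + p₁p₂q₃` but not all three `pᵢ`, and `1`
otherwise. -/
theorem stmt_4 (p₁ p₂ p₃ q₁ q₂ q₃ : ℤ)
    (hp₁ : 1 ≤ p₁) (hp₂ : 1 ≤ p₂) (hp₃ : 1 ≤ p₃)
    (hco₁ : Int.gcd p₁ q₁ = 1) (hco₂ : Int.gcd p₂ q₂ = 1) (hco₃ : Int.gcd p₃ q₃ = 1) :
    Nat.card ((Fin 3 → ZMod 2) ⧸ Submodule.span (ZMod 2)
        ({![(q₁ : ZMod 2), (p₁ : ZMod 2), 0],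
          ![(q₂ : ZMod 2), 0, (p₂ : ZMod 2)],
          ![(q₃ : ZMod 2), -(p₃ : ZMod 2), -(p₃ : ZMod 2)]} : Set (Fin 3 → ZMod 2))) =
      if 2 ∣ p₁ ∧ 2 ∣ p₂ ∧ 2 ∣ p₃ then 4
      else if 2 ∣ (q₁ * p₂ * p₃ + p₁ * q₂ * p₃ + p₁ * p₂ * q₃) then 2
      else 1 := by
  have hset : ({![(q₁ : ZMod 2), (p₁ : ZMod 2), 0],
          ![(q₂ : ZMod 2), 0, (p₂ : ZMod 2)],
          ![(q₃ : ZMod 2), -(p₃ : ZMod 2), -(p₃ : ZMod 2)]} : Set (Fin 3 → ZMod 2)) =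
      Set.range (![![(q₁ : ZMod 2), (p₁ : ZMod 2), 0],
          ![(q₂ : ZMod 2), 0, (p₂ : ZMod 2)],
          ![(q₃ : ZMod 2), -(p₃ : ZMod 2), -(p₃ : ZMod 2)]] : Matrix (Fin 3) (Fin 3) (ZMod 2)) := by
    ext x
    simp only [Matrix.range_cons, Matrix.range_empty, Set.union_empty, Set.mem_insert_iff,
      Set.mem_union, Set.mem_singleton_iff, Set.union_singleton]
    tauto
  rw [hset]
  erw [quot_card_eq_ker_card]
  have hd1 : (2 ∣ p₁) ↔ ((p₁ : ZMod 2) = 0) := by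
    rw [ZMod.intCast_zmod_eq_zero_iff_dvd]; norm_num
  have hd2 : (2 ∣ p₂) ↔ ((p₂ : ZMod 2) = 0) := by
    rw [ZMod.intCast_zmod_eq_zero_iff_dvd]; norm_num
  have hd3 : (2 ∣ p₃) ↔ ((p₃ : ZMod 2) = 0) := by
    rw [ZMod.intCast_zmod_eq_zero_iff_dvd]; norm_num
  have hdD : (2 ∣ (q₁ * p₂ * p₃ + p₁ * q₂ * p₃ + p₁ * p₂ * q₃)) ↔
      ((q₁:ZMod 2) * (p₂:ZMod 2) * (p₃:ZMod 2) + (p₁:ZMod 2) * (q₂:ZMod 2) * (p₃:ZMod 2)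
        + (p₁:ZMod 2) * (p₂:ZMod 2) * (q₃:ZMod 2) = 0) := by
    rw [show (2:ℤ) = ((2:ℕ):ℤ) by norm_num,
      ← ZMod.intCast_zmod_eq_zero_iff_dvd (q₁ * p₂ * p₃ + p₁ * q₂ * p₃ + p₁ * p₂ * q₃) 2]
    push_cast
    rfl
  simp only [hd1, hd2, hd3, hdD]
  exact cases_lemma _ _ _ _ _ _ (fun h => not_both p₁ q₁ hco₁ ⟨h.1, h.2⟩)
    (fun h => not_both p₂ q₂ hco₂ ⟨h.1, h.2⟩) (fun h => not_both p₃ q₃ hco₃ ⟨h.1, h.2⟩)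
end

section
/- Let p₁, p₂, p₃ ≥ 1 and q₁, q₂, q₃ be integers with gcd(pᵢ, qᵢ) = 1 for each i, D := q₁p₂p₃ + p₁q₂p₃ + p₁p₂q₃ ≠ 0, and suppose gcd(p₁, p₂) = 1 and gcd(p₁, p₃) = 1. Then every quadruple (ζ_h, ζ₁, ζ₂, ζ₃) ∈ (ℂˣ)⁴ satisfying ζᵢ^{pᵢ} · ζ_h^{qᵢ} = 1 for i = 1, 2, 3, ζ₁ζ₂ζ₃ = 1, and ζ_h² = 1 also satisfies ζ₁² = 1. -/
/-!
Each relation `ζᵢ ^ pᵢ * ζh ^ qᵢ = 1` together with `ζh ^ 2 = 1` gives `ζᵢ ^ (2 pᵢ) = 1`.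
Since `ζ₁ = (ζ₂ ζ₃)⁻¹`, also `ζ₁ ^ (2 p₂ p₃) = 1`, and as `p₁` is coprime to `p₂ p₃`, a Bézout
combination of the exponents `2 p₁` and `2 p₂ p₃` gives `ζ₁ ^ 2 = 1`.
-/

section

variable {G : Type*}

theorem zpow_mul_eq_one_of_zpow_mul_zpow_eq_one [Group G] {x y : G} {n p q : ℤ}
    (h : x ^ p * y ^ q = 1) (hy : y ^ n = 1) : x ^ (n * p) = 1 := by
  rw [mul_comm, zpow_mul, eq_inv_of_mul_eq_one_left h, ← zpow_neg, ← zpow_mul, mul_comm,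
    zpow_mul, hy, one_zpow]

theorem zpow_eq_one_of_isCoprime [Group G] {x : G} {a m n : ℤ} (hmn : IsCoprime m n)
    (hm : x ^ (a * m) = 1) (hn : x ^ (a * n) = 1) : x ^ a = 1 := by
  obtain ⟨u, v, huv⟩ := hmn
  calc x ^ a = (x ^ (a * m)) ^ u * (x ^ (a * n)) ^ v := by
        rw [← zpow_mul, ← zpow_mul, ← zpow_add]
        congr 1
        linear_combination (-a) * huv
    _ = 1 := by rw [hm, hn, one_zpow, one_zpow, mul_one]

theorem zpow_eq_one_of_mul_mul_eq_one [CommGroup G] {x y z : G} {m : ℤ}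
    (h : x * y * z = 1) (hy : y ^ m = 1) (hz : z ^ m = 1) : x ^ m = 1 := by
  rw [eq_inv_of_mul_eq_one_left (by rwa [← mul_assoc] : x * (y * z) = 1), inv_zpow, mul_zpow,
    hy, hz, mul_one, inv_one]

end

theorem stmt_6_general (p₁ p₂ p₃ q₁ q₂ q₃ : ℤ)
    (h12 : Int.gcd p₁ p₂ = 1) (h13 : Int.gcd p₁ p₃ = 1)
    (ζh ζ₁ ζ₂ ζ₃ : ℂˣ)
    (h1 : ζ₁ ^ p₁ * ζh ^ q₁ = 1) (h2 : ζ₂ ^ p₂ * ζh ^ q₂ = 1)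
    (h3 : ζ₃ ^ p₃ * ζh ^ q₃ = 1) (hprod : ζ₁ * ζ₂ * ζ₃ = 1)
    (hh : ζh ^ 2 = 1) :
    ζ₁ ^ 2 = 1 := by
  replace hh : ζh ^ (2 : ℤ) = 1 := by exact_mod_cast hh
  have hco : IsCoprime p₁ (p₂ * p₃) :=
    (Int.isCoprime_iff_gcd_eq_one.2 h12).mul_right (Int.isCoprime_iff_gcd_eq_one.2 h13)
  have hA : ζ₁ ^ (2 * p₁) = 1 := zpow_mul_eq_one_of_zpow_mul_zpow_eq_one h1 hh
  have h₂ : ζ₂ ^ (2 * p₂ * p₃) = 1 := by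
    rw [zpow_mul, zpow_mul_eq_one_of_zpow_mul_zpow_eq_one h2 hh, one_zpow]
  have h₃ : ζ₃ ^ (2 * p₂ * p₃) = 1 := by
    rw [mul_right_comm, zpow_mul, zpow_mul_eq_one_of_zpow_mul_zpow_eq_one h3 hh, one_zpow]
  have hB : ζ₁ ^ (2 * (p₂ * p₃)) = 1 := by
    rw [← mul_assoc]
    exact zpow_eq_one_of_mul_mul_eq_one hprod h₂ h₃
  exact_mod_cast zpow_eq_one_of_isCoprime hco hA hB

/-- Weakly coprime case (Proposition 5.6): if `gcd(p₁, p₂) = gcd(p₁, p₃) = 1`, every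
quadruple `(ζ_h, ζ₁, ζ₂, ζ₃)` in `(ℂˣ)⁴` with `ζᵢ^{pᵢ} ζ_h^{qᵢ} = 1`, `ζ₁ζ₂ζ₃ = 1`,
`ζ_h² = 1` satisfies `ζ₁² = 1`. -/
theorem stmt_6 (p₁ p₂ p₃ q₁ q₂ q₃ : ℤ)
    (hp₁ : 1 ≤ p₁) (hp₂ : 1 ≤ p₂) (hp₃ : 1 ≤ p₃)
    (hco₁ : Int.gcd p₁ q₁ = 1) (hco₂ : Int.gcd p₂ q₂ = 1) (hco₃ : Int.gcd p₃ q₃ = 1)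
    (hD : q₁ * p₂ * p₃ + p₁ * q₂ * p₃ + p₁ * p₂ * q₃ ≠ 0)
    (h12 : Int.gcd p₁ p₂ = 1) (h13 : Int.gcd p₁ p₃ = 1)
    (ζh ζ₁ ζ₂ ζ₃ : ℂˣ)
    (h1 : ζ₁ ^ p₁ * ζh ^ q₁ = 1) (h2 : ζ₂ ^ p₂ * ζh ^ q₂ = 1)
    (h3 : ζ₃ ^ p₃ * ζh ^ q₃ = 1) (hprod : ζ₁ * ζ₂ * ζ₃ = 1)
    (hh : ζh ^ 2 = 1) :
    ζ₁ ^ 2 = 1 :=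
  stmt_6_general p₁ p₂ p₃ q₁ q₂ q₃ h12 h13 ζh ζ₁ ζ₂ ζ₃ h1 h2 h3 hprod hh
end

section
/- Let p₁, p₂, p₃ be positive integers, set d := gcd(p₁, p₂) and s := gcd(p₁p₂/d, p₃), and assume d > 2, s > 2, and that d ≠ 4 or s ≠ 4. Then there exist complex numbers ζ₁, ζ₂, ζ₃ with ζᵢ^{pᵢ} = 1 and ζᵢ ≠ 1 and ζᵢ ≠ −1 for each i = 1, 2, 3, such that ζ₁ζ₂ζ₃ = 1. -/
/-- Proposition 5.7: if `d = gcd(p₁,p₂) > 2`, `s = gcd(p₁p₂/d, p₃) > 2` and `d ≠ 4` or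
`s ≠ 4`, then there exist `pᵢ`-th roots of unity `ζᵢ ≠ ±1` with `ζ₁ζ₂ζ₃ = 1`. -/
theorem stmt_7 (p₁ p₂ p₃ : ℕ) (hp₁ : 0 < p₁) (hp₂ : 0 < p₂) (hp₃ : 0 < p₃)
    (hd : 2 < Nat.gcd p₁ p₂) (hs : 2 < Nat.gcd (p₁ * p₂ / Nat.gcd p₁ p₂) p₃)
    (h4 : Nat.gcd p₁ p₂ ≠ 4 ∨ Nat.gcd (p₁ * p₂ / Nat.gcd p₁ p₂) p₃ ≠ 4) :
    ∃ ζ₁ ζ₂ ζ₃ : ℂ,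
      ζ₁ ^ p₁ = 1 ∧ ζ₁ ≠ 1 ∧ ζ₁ ≠ -1 ∧
      ζ₂ ^ p₂ = 1 ∧ ζ₂ ≠ 1 ∧ ζ₂ ≠ -1 ∧
      ζ₃ ^ p₃ = 1 ∧ ζ₃ ≠ 1 ∧ ζ₃ ≠ -1 ∧
      ζ₁ * ζ₂ * ζ₃ = 1 := by
  set d := Nat.gcd p₁ p₂ with hd_def
  set m := p₁ * p₂ / d with hm_def
  set s := Nat.gcd m p₃ with hs_def
  have hdpos : 0 < d := Nat.gcd_pos_of_pos_left _ hp₁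
  have hd1 : d ∣ p₁ := Nat.gcd_dvd_left _ _
  have hd2 : d ∣ p₂ := Nat.gcd_dvd_right _ _
  have hdm : d ∣ p₁ * p₂ := hd1.mul_right p₂
  have hm : m * d = p₁ * p₂ := Nat.div_mul_cancel hdm
  have hmpos : 0 < m := by
    rcases Nat.eq_zero_or_pos m with h | h
    · rw [h] at hm; simp at hm; omega
    · exact h
  have hsm : s ∣ m := Nat.gcd_dvd_left _ _
  have hsp₃ : s ∣ p₃ := Nat.gcd_dvd_right _ _
  have hspos : 0 < s := by omega
  set t := m / s * d with ht_def
  have hts : t * s = p₁ * p₂ := by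
    rw [ht_def, mul_right_comm, Nat.div_mul_cancel hsm, hm]
  set g := p₁ / d with hg_def
  set h' := p₂ / d with hh_def
  have hg : g * d = p₁ := Nat.div_mul_cancel hd1
  have hh : h' * d = p₂ := Nat.div_mul_cancel hd2
  have hgpos : 0 < g := by
    rcases Nat.eq_zero_or_pos g with h | h
    · rw [h] at hg; simp at hg; omega
    · exact h
  have hh'pos : 0 < h' := by
    rcases Nat.eq_zero_or_pos h' with h | h
    · rw [h] at hh; simp at hh; omega
    · exact h
  -- integer identities
  have hgZ : (g : ℤ) * d = p₁ := by exact_mod_cast hg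
  have hhZ : (h' : ℤ) * d = p₂ := by exact_mod_cast hh
  have hmZ : (m : ℤ) * d = (p₁ : ℤ) * p₂ := by exact_mod_cast hm
  have htsZ : (t : ℤ) * s = (p₁ : ℤ) * p₂ := by exact_mod_cast hts
  have hgh : (g : ℤ) * p₂ = (h' : ℤ) * p₁ := by
    have h1 : ((g : ℤ) * p₂) * d = ((h' : ℤ) * p₁) * d := by
      linear_combination (p₂:ℤ) * hgZ - (p₁:ℤ) * hhZ
    exact mul_right_cancel₀ (by exact_mod_cast hdpos.ne') h1
  have hgm : (g : ℤ) * p₂ = m := by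
    have h1 : ((g : ℤ) * p₂) * d = (m : ℤ) * d := by
      linear_combination (p₂:ℤ) * hgZ - hmZ
    exact mul_right_cancel₀ (by exact_mod_cast hdpos.ne') h1
  have hhm : (h' : ℤ) * p₁ = m := by rw [← hgh]; exact hgm
  -- Bezout
  have hbez : (d : ℤ) = p₁ * Nat.gcdA p₁ p₂ + p₂ * Nat.gcdB p₁ p₂ := Nat.gcd_eq_gcd_ab p₁ p₂
  set x := Nat.gcdA p₁ p₂ with hx_def
  set y := Nat.gcdB p₁ p₂ with hy_def
  set a₀ : ℤ := (m / s : ℕ) * y with ha₀_def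
  set b₀ : ℤ := (m / s : ℕ) * x with hb₀_def
  have htms : ((m / s : ℕ) : ℤ) * d = t := by
    rw [ht_def]; push_cast; ring
  have hab0 : a₀ * p₂ + b₀ * p₁ = (t : ℤ) := by
    rw [ha₀_def, hb₀_def, ← htms, hbez]; ring
  have hab : ∀ k : ℤ, (a₀ + k * g) * p₂ + (b₀ - k * h') * p₁ = (t : ℤ) := by
    intro k
    linear_combination hab0 + k * hgh
  -- badness difference lemmas
  have LA : ∀ j k : ℤ, (p₁ : ℤ) ∣ 2 * (a₀ + j * g) → (p₁ : ℤ) ∣ 2 * (a₀ + k * g) →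
      (d : ℤ) ∣ 2 * (k - j) := by
    intro j k hj hk
    have h1 : (p₁ : ℤ) ∣ (g : ℤ) * (2 * (k - j)) := by
      have h2 := dvd_sub hk hj
      rw [show (g : ℤ) * (2 * (k - j)) = 2 * (a₀ + k * g) - 2 * (a₀ + j * g) by ring]; exact h2
    rw [← hgZ] at h1
    exact (mul_dvd_mul_iff_left (by positivity : (g:ℤ) ≠ 0)).mp h1
  have LB : ∀ j k : ℤ, (p₂ : ℤ) ∣ 2 * (b₀ - j * h') → (p₂ : ℤ) ∣ 2 * (b₀ - k * h') →
      (d : ℤ) ∣ 2 * (k - j) := by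
    intro j k hj hk
    have h1 : (p₂ : ℤ) ∣ (h' : ℤ) * (2 * (j - k)) := by
      have h2 := dvd_sub hk hj
      rw [show (h' : ℤ) * (2 * (j - k)) = 2 * (b₀ - k * h') - 2 * (b₀ - j * h') by ring]; exact h2
    rw [← hhZ] at h1
    have h3 := (mul_dvd_mul_iff_left (by positivity : (h':ℤ) ≠ 0)).mp h1
    have h2 : (d : ℤ) ∣ -(2 * (j - k)) := dvd_neg.mpr h3
    convert h2 using 1; ring
  have hdvd2 : ¬ ((d : ℤ) ∣ 2) := by
    intro h
    have h1 : d ∣ 2 := by exact_mod_cast h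
    have := Nat.le_of_dvd (by norm_num) h1
    omega
  have hd4of : (d : ℤ) ∣ 4 → d = 4 := by
    intro h
    have h1 : d ∣ 4 := by exact_mod_cast h
    have := Nat.le_of_dvd (by norm_num) h1
    interval_cases d
    · exact absurd h1 (by norm_num)
    · rfl
  -- find good (a, b)
  have key : ∃ a b : ℤ, a * p₂ + b * p₁ = (t : ℤ) ∧ ¬ ((p₁ : ℤ) ∣ 2 * a) ∧
      ¬ ((p₂ : ℤ) ∣ 2 * b) := by
    have pick : ∃ k : ℤ, ¬ ((p₁ : ℤ) ∣ 2 * (a₀ + k * g)) ∧ ¬ ((p₂ : ℤ) ∣ 2 * (b₀ - k * h')) := by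
      by_contra hc
      push_neg at hc
      have hk : ∀ k : ℤ, ((p₁ : ℤ) ∣ 2 * (a₀ + k * g)) ∨ ((p₂ : ℤ) ∣ 2 * (b₀ - k * h')) := by
        intro k
        by_contra hkk
        push_neg at hkk
        exact absurd (hc k hkk.1) hkk.2
      have LA01 : (p₁:ℤ) ∣ 2*(a₀ + 0*g) → (p₁:ℤ) ∣ 2*(a₀ + 1*g) → False := by
        intro h1 h2; exact hdvd2 (by simpa using LA 0 1 h1 h2)
      have LA12 : (p₁:ℤ) ∣ 2*(a₀ + 1*g) → (p₁:ℤ) ∣ 2*(a₀ + 2*g) → False := by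
        intro h1 h2; exact hdvd2 (by simpa using LA 1 2 h1 h2)
      have LB01 : (p₂:ℤ) ∣ 2*(b₀ - 0*h') → (p₂:ℤ) ∣ 2*(b₀ - 1*h') → False := by
        intro h1 h2; exact hdvd2 (by simpa using LB 0 1 h1 h2)
      have LB12 : (p₂:ℤ) ∣ 2*(b₀ - 1*h') → (p₂:ℤ) ∣ 2*(b₀ - 2*h') → False := by
        intro h1 h2; exact hdvd2 (by simpa using LB 1 2 h1 h2)
      have LA02 : (p₁:ℤ) ∣ 2*(a₀ + 0*g) → (p₁:ℤ) ∣ 2*(a₀ + 2*g) → d = 4 := by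
        intro h1 h2; exact hd4of (by simpa using LA 0 2 h1 h2)
      have LB02 : (p₂:ℤ) ∣ 2*(b₀ - 0*h') → (p₂:ℤ) ∣ 2*(b₀ - 2*h') → d = 4 := by
        intro h1 h2; exact hd4of (by simpa using LB 0 2 h1 h2)
      -- the two genuinely hard patterns: derive s ∣ 4 (given d = 4)
      have hsn4 : d = 4 → ¬ ((s : ℤ) ∣ 4) := by
        intro hd4 h
        have h1 : s ∣ 4 := by exact_mod_cast h
        have h2 := Nat.le_of_dvd (by norm_num) h1
        have hs4 : s ≠ 4 := by
          rcases h4 with h4' | h4'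
          · exact absurd hd4 h4'
          · exact h4'
        interval_cases s
        · exact absurd h1 (by norm_num)
        · exact hs4 rfl
      have hm4 : d = 4 → (m : ℤ) * 4 = (p₁ : ℤ) * p₂ := by
        intro hd4
        have hc4 : ((d : ℕ) : ℤ) = 4 := by exact_mod_cast hd4
        rw [← hmZ, hc4]
      have hard1 : (p₁:ℤ) ∣ 2*(a₀ + 0*g) → (p₂:ℤ) ∣ 2*(b₀ - 1*h') → d = 4 → False := by
        intro h0 h1 hd4
        obtain ⟨u, hu⟩ := h0
        obtain ⟨w, hw⟩ := h1
        have h2t : 2 * (t : ℤ) = (p₁ : ℤ) * p₂ * (u + w) + 2 * m := by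
          linear_combination (-2) * hab0 + (p₂:ℤ) * hu + (p₁:ℤ) * hw + 2 * hhm
        have hcan : (2 * (m:ℤ)) * 4 = (2 * (m:ℤ)) * ((s:ℤ) * (2 * (u + w) + 1)) := by
          linear_combination (s:ℤ) * h2t + (-2) * htsZ + (2 - (s:ℤ) * (u + w)) * hm4 hd4
        have h4' : (4 : ℤ) = (s:ℤ) * (2 * (u + w) + 1) :=
          mul_left_cancel₀ (by positivity) hcan
        exact hsn4 hd4 ⟨2 * (u + w) + 1, h4'⟩
      have hard2 : (p₁:ℤ) ∣ 2*(a₀ + 1*g) → (p₂:ℤ) ∣ 2*(b₀ - 0*h') → d = 4 → False := by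
        intro h0 h1 hd4
        obtain ⟨u, hu⟩ := h0
        obtain ⟨w, hw⟩ := h1
        have h2t : 2 * (t : ℤ) = (p₁ : ℤ) * p₂ * (u + w) - 2 * m := by
          linear_combination (-2) * hab0 + (p₂:ℤ) * hu + (p₁:ℤ) * hw - 2 * hgm
        have hcan : (2 * (m:ℤ)) * 4 = (2 * (m:ℤ)) * ((s:ℤ) * (2 * (u + w) - 1)) := by
          linear_combination (s:ℤ) * h2t + (-2) * htsZ + (2 - (s:ℤ) * (u + w)) * hm4 hd4
        have h4' : (4 : ℤ) = (s:ℤ) * (2 * (u + w) - 1) :=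
          mul_left_cancel₀ (by positivity) hcan
        exact hsn4 hd4 ⟨2 * (u + w) - 1, h4'⟩
      rcases hk 0 with h0 | h0 <;> rcases hk 1 with h1 | h1 <;> rcases hk 2 with h2 | h2
      · exact LA01 h0 h1
      · exact LA01 h0 h1
      · exact hard1 h0 h1 (LA02 h0 h2)
      · exact LB12 h1 h2
      · exact LA12 h1 h2
      · exact hard2 h1 h0 (LB02 h0 h2)
      · exact LB01 h0 h1
      · exact LB01 h0 h1
    obtain ⟨k, hAk, hBk⟩ := pick
    exact ⟨a₀ + k * g, b₀ - k * h', hab k, hAk, hBk⟩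
  obtain ⟨a, b, habt, hA, hB⟩ := key
  -- construct the roots of unity
  set N := p₁ * p₂ * s with hN_def
  have hN0 : N ≠ 0 := by positivity
  have hξ := Complex.isPrimitiveRoot_exp N hN0
  set ξ := Complex.exp (2 * Real.pi * Complex.I / N) with hξ_def
  have hone : ∀ e : ℤ, ξ ^ e = 1 ↔ (N : ℤ) ∣ e := fun e => hξ.zpow_eq_one_iff_dvd e
  have hps0 : ((p₂ : ℤ) * s) ≠ 0 := by positivity
  have hps0' : ((p₁ : ℤ) * s) ≠ 0 := by positivity
  have hpp0 : ((p₁ : ℤ) * p₂) ≠ 0 := by positivity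
  have hNZ : ((N : ℕ) : ℤ) = (p₁ : ℤ) * p₂ * s := by push_cast [hN_def]; ring
  have hsq₁ : ¬ ((ξ ^ (a * ((p₂ : ℤ) * s))) ^ (2 : ℕ) = 1) := by
    rw [← zpow_natCast, ← zpow_mul, hone]
    rintro ⟨c, hc⟩
    apply hA
    refine ⟨c, ?_⟩
    rw [hNZ] at hc
    have h1 : (2 * a) * ((p₂:ℤ) * s) = ((p₁:ℤ) * c) * ((p₂:ℤ) * s) := by
      linear_combination hc
    exact mul_right_cancel₀ hps0 h1
  have hsq₂ : ¬ ((ξ ^ (b * ((p₁ : ℤ) * s))) ^ (2 : ℕ) = 1) := by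
    rw [← zpow_natCast, ← zpow_mul, hone]
    rintro ⟨c, hc⟩
    apply hB
    refine ⟨c, ?_⟩
    rw [hNZ] at hc
    have h1 : (2 * b) * ((p₁:ℤ) * s) = ((p₂:ℤ) * c) * ((p₁:ℤ) * s) := by
      linear_combination hc
    exact mul_right_cancel₀ hps0' h1
  have hsq₃ : ¬ ((ξ ^ (-((p₁ : ℤ) * p₂))) ^ (2 : ℕ) = 1) := by
    rw [← zpow_natCast, ← zpow_mul, hone]
    rintro ⟨c, hc⟩
    rw [hNZ] at hc
    have h1 : ((s:ℤ) * c) * ((p₁:ℤ) * p₂) = (-2) * ((p₁:ℤ) * p₂) := by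
      linear_combination -hc
    have hsc : (s : ℤ) * c = -2 := mul_right_cancel₀ hpp0 h1
    have h2 : (s : ℤ) ∣ 2 := ⟨-c, by linarith⟩
    have h3 : s ∣ 2 := by exact_mod_cast h2
    have := Nat.le_of_dvd (by norm_num) h3
    omega
  refine ⟨ξ ^ (a * ((p₂ : ℤ) * s)), ξ ^ (b * ((p₁ : ℤ) * s)), ξ ^ (-((p₁ : ℤ) * p₂)),
    ?_, ?_, ?_, ?_, ?_, ?_, ?_, ?_, ?_, ?_⟩
  · rw [← zpow_natCast, ← zpow_mul, hone]
    exact ⟨a, by rw [hNZ]; ring⟩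
  · intro h; exact hsq₁ (by rw [h]; norm_num)
  · intro h; exact hsq₁ (by rw [h]; norm_num)
  · rw [← zpow_natCast, ← zpow_mul, hone]
    exact ⟨b, by rw [hNZ]; ring⟩
  · intro h; exact hsq₂ (by rw [h]; norm_num)
  · intro h; exact hsq₂ (by rw [h]; norm_num)
  · rw [← zpow_natCast, ← zpow_mul, hone]
    obtain ⟨c, hcq⟩ := hsp₃
    exact ⟨-(c : ℤ), by rw [hNZ, hcq]; push_cast; ring⟩
  · intro h; exact hsq₃ (by rw [h]; norm_num)
  · intro h; exact hsq₃ (by rw [h]; norm_num)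
  · rw [← zpow_add₀ (Complex.exp_ne_zero _), ← zpow_add₀ (Complex.exp_ne_zero _), hone]
    exact ⟨0, by rw [hNZ]; linear_combination (s:ℤ) * habt + htsZ⟩
end

section
/- Let p₁, p₂ be positive integers, d := gcd(p₁, p₂), and let s be a positive integer dividing p₁p₂/d. Assume d > 2, s > 2, and that d ≠ 4 or s ≠ 4. Then there exist integers v₁, v₂ such that v₁·p₂ + v₂·p₁ = p₁·p₂/s, p₁ does not divide 2v₁, and p₂ does not divide 2v₂. -/
/-!
Write `p₁ = a d`, `p₂ = b d` with `a, b` coprime and `s m = d a b`. The equation becomes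
`v₁ b + v₂ a = m`, whose solutions are `(x + t a, y - t b)` for one Bezout solution `(x, y)`.
If `t` and `t'` both make the first (or both the second) divisibility hold, then `d ∣ 2 (t - t')`.
As `d > 2`, no two consecutive `t` are bad for the same coordinate, so if `t = 0, 1, 2` were all
bad, one coordinate would be bad at `t` and `t + 2`, forcing `d = 4`. But for `d = 4` a bad `t`
for each coordinate gives `a ∣ x` and `b ∣ y`, hence `a b ∣ m` and `s ∣ 4`, i.e. `s = 4`.
-/

lemma eq_four_of_dvd_four {n : ℕ} (hn : 2 < n) (h : n ∣ 4) : n = 4 := by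
  have : n ≤ 4 := Nat.le_of_dvd four_pos h
  interval_cases n <;> simp_all

lemma dvd_two_mul_of_mul_dvd_two_mul {a d u u' k : ℤ} (ha : a ≠ 0) (hu : a * d ∣ 2 * u)
    (hu' : a * d ∣ 2 * u') (h : u' - u = k * a) : d ∣ 2 * k := by
  have : a * d ∣ a * (2 * k) := by
    rw [show a * (2 * k) = 2 * u' - 2 * u by linear_combination -2 * h]
    exact dvd_sub hu' hu
  exact (mul_dvd_mul_iff_left ha).mp this

lemma dvd_of_mul_four_dvd_two_mul {a u : ℤ} (h : a * 4 ∣ 2 * u) : a ∣ u := by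
  rw [show a * 4 = 2 * (a * 2) by ring] at h
  exact dvd_of_mul_right_dvd ((mul_dvd_mul_iff_left two_ne_zero).mp h)

lemma dvd_of_mul_add_mul_eq_mul {a b x y s d : ℤ} (hab : a * b ≠ 0) (hx : a ∣ x) (hy : b ∣ y)
    (hs : s * (x * b + y * a) = a * b * d) : s ∣ d := by
  obtain ⟨x', rfl⟩ := hx
  obtain ⟨y', rfl⟩ := hy
  refine ⟨x' + y', mul_left_cancel₀ hab ?_⟩
  linear_combination hs.symm

lemma exists_not_and_not_of_not_consecutive (B₁ B₂ : ℤ → Prop)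
    (h₁ : ∀ t, B₁ t → ¬ B₁ (t + 1)) (h₂ : ∀ t, B₂ t → ¬ B₂ (t + 1))
    (h₁₂ : ∀ t t', B₁ t → B₁ (t + 2) → ¬ B₂ t') (h₂₁ : ∀ t t', B₂ t → B₂ (t + 2) → ¬ B₁ t') :
    ∃ t, ¬ B₁ t ∧ ¬ B₂ t := by
  by_contra! hcover
  have hcover' : ∀ t, ¬ B₂ t → B₁ t := fun t h => by_contra fun h' => h (hcover t h')
  by_cases h0 : B₁ 0
  · have hB₂ : B₂ 1 := hcover 1 (h₁ 0 h0)
    exact h₁₂ 0 1 h0 (hcover' 2 (h₂ 1 hB₂)) hB₂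
  · have hB₂ : B₂ 0 := hcover 0 h0
    have hB₁ : B₁ 1 := hcover' 1 (h₂ 0 hB₂)
    exact h₂₁ 0 1 hB₂ (hcover 2 (h₁ 1 hB₁)) hB₁

lemma exists_shift_not_dvd {a b x y : ℤ} {d s : ℕ} (ha : a ≠ 0) (hb : b ≠ 0) (hd : 2 < d)
    (hs : 2 < s) (h4 : d ≠ 4 ∨ s ≠ 4) (hsm : (s : ℤ) * (x * b + y * a) = a * b * d) :
    ∃ t : ℤ, ¬ a * d ∣ 2 * (x + t * a) ∧ ¬ b * d ∣ 2 * (y - t * b) := by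
  have hd2 : ¬ (d : ℤ) ∣ 2 * 1 := by
    rw [mul_one]
    exact_mod_cast fun h => (Nat.le_of_dvd two_pos h).not_gt hd
  have hd4 (h : (d : ℤ) ∣ 2 * 2) : d = 4 := eq_four_of_dvd_four hd (by exact_mod_cast h)
  have hcross (t t' : ℤ) (hx : a * d ∣ 2 * (x + t * a)) (hy : b * d ∣ 2 * (y - t' * b)) :
      d ≠ 4 := by
    rintro rfl
    have hax : a ∣ x := (dvd_add_left (dvd_mul_left a t)).mp
      (dvd_of_mul_four_dvd_two_mul (by exact_mod_cast hx))
    have hby : b ∣ y := (dvd_sub_left (dvd_mul_left b t')).mp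
      (dvd_of_mul_four_dvd_two_mul (by exact_mod_cast hy))
    have hs4 : (s : ℤ) ∣ 4 := by
      exact_mod_cast dvd_of_mul_add_mul_eq_mul (mul_ne_zero ha hb) hax hby hsm
    exact h4.resolve_left (by simp) (eq_four_of_dvd_four hs (by exact_mod_cast hs4))
  apply exists_not_and_not_of_not_consecutive
  · exact fun t h h' => hd2 (dvd_two_mul_of_mul_dvd_two_mul ha h h' (by ring))
  · exact fun t h h' => hd2 (dvd_two_mul_of_mul_dvd_two_mul hb h' h (by ring))
  · exact fun t t' h h' hy =>
      hcross t t' h hy (hd4 (dvd_two_mul_of_mul_dvd_two_mul ha h h' (by ring)))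
  · exact fun t t' h h' hx =>
      hcross t' t hx h (hd4 (dvd_two_mul_of_mul_dvd_two_mul hb h' h (by ring)))

lemma exists_sum_eq_not_dvd {a b m : ℤ} {d s : ℕ} (hab : IsCoprime a b) (ha : a ≠ 0)
    (hb : b ≠ 0) (hd : 2 < d) (hs : 2 < s) (h4 : d ≠ 4 ∨ s ≠ 4) (hsm : (s : ℤ) * m = a * b * d) :
    ∃ v₁ v₂ : ℤ, v₁ * b + v₂ * a = m ∧ ¬ a * d ∣ 2 * v₁ ∧ ¬ b * d ∣ 2 * v₂ := by
  obtain ⟨u, w, huw⟩ := hab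
  have hxy : m * w * b + m * u * a = m := by linear_combination m * huw
  obtain ⟨t, ht₁, ht₂⟩ := exists_shift_not_dvd ha hb hd hs h4 (hxy ▸ hsm)
  exact ⟨_, _, by linear_combination hxy, ht₁, ht₂⟩

theorem stmt_8_general (p₁ p₂ s : ℕ) (hp₁ : 0 < p₁) (hp₂ : 0 < p₂)
    (hsdvd : s ∣ p₁ * p₂ / Nat.gcd p₁ p₂)
    (hd : 2 < Nat.gcd p₁ p₂) (hs : 2 < s)
    (h4 : Nat.gcd p₁ p₂ ≠ 4 ∨ s ≠ 4) :
    ∃ v₁ v₂ : ℤ,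
      v₁ * p₂ + v₂ * p₁ = ((p₁ * p₂ / s : ℕ) : ℤ) ∧
      ¬ ((p₁ : ℤ) ∣ 2 * v₁) ∧ ¬ ((p₂ : ℤ) ∣ 2 * v₂) := by
  obtain ⟨a, b, hab, ha, hb⟩ := Nat.exists_coprime p₁ p₂
  set d := Nat.gcd p₁ p₂
  have hd0 : 0 < d := by omega
  have hprod : p₁ * p₂ = a * b * d * d := by rw [ha, hb]; ring
  obtain ⟨m, hm⟩ := hsdvd
  rw [hprod, Nat.mul_div_cancel _ hd0] at hm
  have hN : p₁ * p₂ / s = d * m := by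
    rw [hprod, hm, mul_right_comm, mul_assoc, Nat.mul_div_cancel_left _ (by omega)]
  obtain ⟨v₁, v₂, hv, hv₁, hv₂⟩ := exists_sum_eq_not_dvd (m := m)
    (Nat.isCoprime_iff_coprime.mpr hab) (Int.natCast_ne_zero.mpr (by rintro rfl; omega))
    (Int.natCast_ne_zero.mpr (by rintro rfl; omega)) hd hs h4 (by exact_mod_cast hm.symm)
  refine ⟨v₁, v₂, ?_, by rwa [ha, Nat.cast_mul], by rwa [hb, Nat.cast_mul]⟩
  rw [hN, ha, hb]
  push_cast
  linear_combination (d : ℤ) * hv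

/-- Key arithmetic claim in the proof of Proposition 5.7: there are integers `v₁, v₂` with
`v₁ p₂ + v₂ p₁ = p₁ p₂ / s`, `p₁ ∤ 2v₁` and `p₂ ∤ 2v₂`. -/
theorem stmt_8 (p₁ p₂ s : ℕ) (hp₁ : 0 < p₁) (hp₂ : 0 < p₂) (hs0 : 0 < s)
    (hsdvd : s ∣ p₁ * p₂ / Nat.gcd p₁ p₂)
    (hd : 2 < Nat.gcd p₁ p₂) (hs : 2 < s)
    (h4 : Nat.gcd p₁ p₂ ≠ 4 ∨ s ≠ 4) :
    ∃ v₁ v₂ : ℤ,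
      v₁ * p₂ + v₂ * p₁ = ((p₁ * p₂ / s : ℕ) : ℤ) ∧
      ¬ ((p₁ : ℤ) ∣ 2 * v₁) ∧ ¬ ((p₂ : ℤ) ∣ 2 * v₂) :=
  stmt_8_general p₁ p₂ s hp₁ hp₂ hsdvd hd hs h4
end

section
/- Let θ₁, θ₂, θ₃ ∈ [0, π]. Then there exist matrices A, B in the special unitary group SU(2) (Matrix.specialUnitaryGroup (Fin 2) ℂ) with trace A = 2cos θ₁, trace B = 2cos θ₂, and trace (A·B) = 2cos θ₃, if and only if |θ₁ − θ₂| ≤ θ₃, θ₃ ≤ θ₁ + θ₂, and θ₃ ≤ 2π − θ₁ − θ₂. -/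
/-!
An element of SU(2) is `!![a, b; -conj b, conj a]` with `|a|² + |b|² = 1`, i.e. a unit quaternion,
and its trace is `2 Re a`. For the product of two such matrices, `Re (a c - b conj d)` equals
`Re a Re c` minus the inner product of the vectors `(Im a, b)` and `(Im c, d)` in `ℝ³`, whose
lengths are `sin θ₁` and `sin θ₂`. By Cauchy–Schwarz, and conversely by rotating the second vector
(intermediate value theorem), half the trace of `AB` ranges exactly over
`[cos (θ₁ + θ₂), cos (θ₁ - θ₂)]`. Since `cos` is strictly decreasing on `[0, π]`, membership of
`cos θ₃` in that interval is the stated system of inequalities.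
-/

open Real Matrix
open Complex (normSq)
open scoped ComplexConjugate

noncomputable def su2Matrix (a b : ℂ) : Matrix (Fin 2) (Fin 2) ℂ :=
  !![a, b; -conj b, conj a]

theorem det_su2Matrix (a b : ℂ) : (su2Matrix a b).det = ((normSq a + normSq b : ℝ) : ℂ) := by
  rw [su2Matrix, det_fin_two_of, Complex.ofReal_add, ← Complex.mul_conj, ← Complex.mul_conj]
  ring

theorem trace_su2Matrix (a b : ℂ) : trace (su2Matrix a b) = ((2 * a.re : ℝ) : ℂ) := by
  rw [su2Matrix, trace_fin_two_of, Complex.add_conj]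

theorem su2Matrix_mul_su2Matrix (a b c d : ℂ) :
    su2Matrix a b * su2Matrix c d = su2Matrix (a * c - b * conj d) (a * d + b * conj c) := by
  ext i j; fin_cases i <;> fin_cases j <;> simp [su2Matrix] <;> ring

theorem star_su2Matrix (a b : ℂ) : star (su2Matrix a b) = su2Matrix (conj a) (-b) := by
  ext i j; fin_cases i <;> fin_cases j <;> simp [su2Matrix]

theorem su2Matrix_one_zero : su2Matrix 1 0 = 1 := by
  rw [su2Matrix, one_fin_two, map_one, map_zero, neg_zero]

theorem mem_specialUnitaryGroup_fin_two_iff {M : Matrix (Fin 2) (Fin 2) ℂ} :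
    M ∈ specialUnitaryGroup (Fin 2) ℂ ↔
      ∃ a b : ℂ, normSq a + normSq b = 1 ∧ M = su2Matrix a b := by
  refine ⟨fun hM => ?_, ?_⟩
  · obtain ⟨hU, hdet⟩ := mem_specialUnitaryGroup_iff.1 hM
    have hstar : star M = adjugate M := by
      rw [← inv_eq_right_inv (mem_unitaryGroup_iff.1 hU), Matrix.inv_def, hdet, Ring.inverse_one,
        one_smul]
    have h00 := congrFun₂ hstar 0 0
    have h10 := congrFun₂ hstar 1 0
    simp only [star_apply, adjugate_fin_two, of_apply, cons_val', cons_val_zero, cons_val_one,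
      empty_val', cons_val_fin_one] at h00 h10
    have hM' : M = su2Matrix (M 0 0) (M 0 1) := by
      rw [su2Matrix, ← Complex.star_def, h00, h10, neg_neg]
      exact eta_fin_two M
    rw [hM', det_su2Matrix] at hdet
    exact ⟨M 0 0, M 0 1, by exact_mod_cast hdet, hM'⟩
  · rintro ⟨a, b, h, rfl⟩
    refine mem_specialUnitaryGroup_iff.2 ⟨mem_unitaryGroup_iff.2 ?_, ?_⟩
    · rw [star_su2Matrix, su2Matrix_mul_su2Matrix, Complex.conj_conj, map_neg, mul_neg,
        sub_neg_eq_add, Complex.mul_conj, Complex.mul_conj, ← Complex.ofReal_add, h,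
        Complex.ofReal_one, mul_neg, mul_comm b a, neg_add_cancel, su2Matrix_one_zero]
    · rw [det_su2Matrix, h, Complex.ofReal_one]

theorem abs_re_mul_sub_mul_conj_sub_re_mul_re_le {a b c d : ℂ}
    (hab : normSq a + normSq b = 1) (hcd : normSq c + normSq d = 1) :
    |(a * c - b * conj d).re - a.re * c.re| ≤ √(1 - a.re ^ 2) * √(1 - c.re ^ 2) := by
  simp only [Complex.normSq_apply] at hab hcd
  have hre : (a * c - b * conj d).re - a.re * c.re =
      -(a.im * c.im + b.re * d.re + b.im * d.im) := by
    simp only [Complex.sub_re, Complex.mul_re, Complex.conj_re, Complex.conj_im]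
    ring
  rw [hre, ← Real.sqrt_mul (by nlinarith)]
  apply Real.abs_le_sqrt
  -- Cauchy–Schwarz in `ℝ³`, via Lagrange's identity
  nlinarith [sq_nonneg (a.im * d.re - b.re * c.im), sq_nonneg (a.im * d.im - b.im * c.im),
    sq_nonneg (b.re * d.im - b.im * d.re)]

theorem mem_Icc_cos_add_cos_sub_of_trace_eq {θ₁ θ₂ t : ℝ} (h₁ : θ₁ ∈ Set.Icc 0 π)
    (h₂ : θ₂ ∈ Set.Icc 0 π) {A B : specialUnitaryGroup (Fin 2) ℂ}
    (hA : trace (A : Matrix (Fin 2) (Fin 2) ℂ) = ((2 * cos θ₁ : ℝ) : ℂ))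
    (hB : trace (B : Matrix (Fin 2) (Fin 2) ℂ) = ((2 * cos θ₂ : ℝ) : ℂ))
    (hAB : trace ((A * B : specialUnitaryGroup (Fin 2) ℂ) : Matrix (Fin 2) (Fin 2) ℂ) =
      ((2 * t : ℝ) : ℂ)) :
    t ∈ Set.Icc (cos (θ₁ + θ₂)) (cos (θ₁ - θ₂)) := by
  obtain ⟨a, b, hab, hA'⟩ := mem_specialUnitaryGroup_fin_two_iff.1 A.2
  obtain ⟨c, d, hcd, hB'⟩ := mem_specialUnitaryGroup_fin_two_iff.1 B.2
  rw [hA', trace_su2Matrix, Complex.ofReal_inj] at hA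
  rw [hB', trace_su2Matrix, Complex.ofReal_inj] at hB
  rw [Submonoid.coe_mul, hA', hB', su2Matrix_mul_su2Matrix, trace_su2Matrix,
    Complex.ofReal_inj] at hAB
  have hbound := abs_re_mul_sub_mul_conj_sub_re_mul_re_le hab hcd
  rw [show a.re = cos θ₁ by linarith, show c.re = cos θ₂ by linarith,
    show (a * c - b * conj d).re = t by linarith, ← sin_eq_sqrt_one_sub_cos_sq h₁.1 h₁.2,
    ← sin_eq_sqrt_one_sub_cos_sq h₂.1 h₂.2] at hbound
  obtain ⟨hlo, hhi⟩ := abs_le.1 hbound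
  rw [cos_add, cos_sub]
  constructor <;> linarith

theorem exists_trace_eq_of_mem_Icc_cos_add_cos_sub {θ₁ θ₂ t : ℝ}
    (ht : t ∈ Set.Icc (cos (θ₁ + θ₂)) (cos (θ₁ - θ₂))) :
    ∃ A B : specialUnitaryGroup (Fin 2) ℂ,
      trace (A : Matrix (Fin 2) (Fin 2) ℂ) = ((2 * cos θ₁ : ℝ) : ℂ) ∧
      trace (B : Matrix (Fin 2) (Fin 2) ℂ) = ((2 * cos θ₂ : ℝ) : ℂ) ∧
      trace ((A * B : specialUnitaryGroup (Fin 2) ℂ) : Matrix (Fin 2) (Fin 2) ℂ) =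
        ((2 * t : ℝ) : ℂ) := by
  -- `A = diag (e^{iθ₁}, e^{-iθ₁})`, and `B` has angle `θ₂` about an axis at angle `φ` from that
  -- of `A`; then `tr (A B) / 2` is the function `f` below.
  obtain ⟨φ, -, hφ⟩ := intermediate_value_Icc pi_pos.le
    (f := fun φ => cos θ₁ * cos θ₂ - sin θ₁ * sin θ₂ * cos φ) (by fun_prop)
    (by simpa [cos_add, cos_sub] using ht)
  have hA : normSq ⟨cos θ₁, sin θ₁⟩ + normSq 0 = 1 := by
    rw [Complex.normSq_mk, Complex.normSq_zero]
    linear_combination cos_sq_add_sin_sq θ₁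
  have hB : normSq ⟨cos θ₂, sin θ₂ * cos φ⟩ + normSq (sin θ₂ * sin φ : ℝ) = 1 := by
    rw [Complex.normSq_mk, Complex.normSq_ofReal]
    linear_combination cos_sq_add_sin_sq θ₂ + sin θ₂ ^ 2 * cos_sq_add_sin_sq φ
  refine ⟨⟨_, mem_specialUnitaryGroup_fin_two_iff.2 ⟨_, _, hA, rfl⟩⟩,
    ⟨_, mem_specialUnitaryGroup_fin_two_iff.2 ⟨_, _, hB, rfl⟩⟩, trace_su2Matrix _ _,
    trace_su2Matrix _ _, ?_⟩
  rw [Submonoid.coe_mul, su2Matrix_mul_su2Matrix, trace_su2Matrix, ← hφ]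
  simp only [zero_mul, sub_zero, Complex.mul_re]
  ring_nf

theorem cos_mem_Icc_cos_add_cos_sub_iff {θ₁ θ₂ θ₃ : ℝ} (h₁ : θ₁ ∈ Set.Icc 0 π)
    (h₂ : θ₂ ∈ Set.Icc 0 π) (h₃ : θ₃ ∈ Set.Icc 0 π) :
    cos θ₃ ∈ Set.Icc (cos (θ₁ + θ₂)) (cos (θ₁ - θ₂)) ↔
      |θ₁ - θ₂| ≤ θ₃ ∧ θ₃ ≤ θ₁ + θ₂ ∧ θ₃ ≤ 2 * π - θ₁ - θ₂ := by
  obtain ⟨h₁0, h₁π⟩ := h₁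
  obtain ⟨h₂0, h₂π⟩ := h₂
  have hmin : min (θ₁ + θ₂) (2 * π - θ₁ - θ₂) ∈ Set.Icc 0 π := by
    constructor
    · exact le_min (by linarith) (by linarith)
    · rcases le_total (θ₁ + θ₂) π with h | h
      · exact (min_le_left _ _).trans h
      · exact (min_le_right _ _).trans (by linarith)
  have hcos_min : cos (min (θ₁ + θ₂) (2 * π - θ₁ - θ₂)) = cos (θ₁ + θ₂) := by
    rcases min_choice (θ₁ + θ₂) (2 * π - θ₁ - θ₂) with h | h <;> rw [h]
    rw [sub_sub, cos_two_pi_sub]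
  have habs : |θ₁ - θ₂| ∈ Set.Icc 0 π :=
    ⟨abs_nonneg _, abs_sub_le_iff.2 ⟨by linarith, by linarith⟩⟩
  rw [Set.mem_Icc, ← hcos_min, ← cos_abs (θ₁ - θ₂), strictAntiOn_cos.le_iff_ge hmin h₃,
    strictAntiOn_cos.le_iff_ge h₃ habs, le_min_iff]
  tauto

/-- Lemma 3.2 (Sebastian–Zentner): for `θ₁, θ₂, θ₃ ∈ [0, π]`, there exist `A, B ∈ SU(2)`
with traces `2cos θ₁`, `2cos θ₂` and `trace (AB) = 2cos θ₃` iff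
`|θ₁ - θ₂| ≤ θ₃ ≤ min(θ₁ + θ₂, 2π - θ₁ - θ₂)`. -/
theorem stmt_10 (θ₁ θ₂ θ₃ : ℝ)
    (h₁ : θ₁ ∈ Set.Icc 0 π) (h₂ : θ₂ ∈ Set.Icc 0 π) (h₃ : θ₃ ∈ Set.Icc 0 π) :
    (∃ A B : Matrix.specialUnitaryGroup (Fin 2) ℂ,
        Matrix.trace (A : Matrix (Fin 2) (Fin 2) ℂ) = ((2 * Real.cos θ₁ : ℝ) : ℂ) ∧
        Matrix.trace (B : Matrix (Fin 2) (Fin 2) ℂ) = ((2 * Real.cos θ₂ : ℝ) : ℂ) ∧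
        Matrix.trace ((A * B : Matrix.specialUnitaryGroup (Fin 2) ℂ) :
          Matrix (Fin 2) (Fin 2) ℂ) = ((2 * Real.cos θ₃ : ℝ) : ℂ)) ↔
      |θ₁ - θ₂| ≤ θ₃ ∧ θ₃ ≤ θ₁ + θ₂ ∧ θ₃ ≤ 2 * π - θ₁ - θ₂ := by
  rw [← cos_mem_Icc_cos_add_cos_sub_iff h₁ h₂ h₃]
  exact ⟨fun ⟨A, B, hA, hB, hAB⟩ => mem_Icc_cos_add_cos_sub_of_trace_eq h₁ h₂ hA hB hAB,
    exists_trace_eq_of_mem_Icc_cos_add_cos_sub⟩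
end

section
/- Let p ≥ 2 and q be integers with gcd(p, q) = 1. Then there exists a complex number λ with λ^p = (−1)^q, |λ| = 1, and −1 ≤ λ + λ⁻¹ ≤ √2 (the sum λ + λ⁻¹ being real). -/
/-- For integers `p ≥ 2` and `q` with `gcd(p, q) = 1`, there is `λ ∈ ℂ` with
`λ^p = (-1)^q`, `|λ| = 1` and `λ + λ⁻¹` a real number in `[-1, √2]`. -/
theorem stmt_11 (p q : ℤ) (hp : 2 ≤ p) (hco : Int.gcd p q = 1) :
    ∃ lam : ℂ, lam ^ p = (-1 : ℂ) ^ q ∧ ‖lam‖ = 1 ∧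
      ∃ r : ℝ, lam + lam⁻¹ = (r : ℂ) ∧ -1 ≤ r ∧ r ≤ Real.sqrt 2 := by
  have hpar : ¬ ((2:ℤ) ∣ p ∧ (2:ℤ) ∣ q) := by
    rintro ⟨h1, h2⟩
    have h := Int.dvd_gcd h1 h2
    rw [hco] at h
    norm_num at h
  set k0 : ℤ := (p + 3) / 4 with hk0
  set k : ℤ := if (q - k0) % 2 = 0 then k0 else k0 + 1 with hk
  have hA : p ≤ 4 * k ∧ 3 * k ≤ 2 * p ∧ (q - k) % 2 = 0 := by
    rw [hk]
    split <;> omega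
  obtain ⟨hA, hB, hC⟩ := hA
  have hkpos : 0 < k := by omega
  have hp0 : (0:ℝ) < (p:ℝ) := by exact_mod_cast (by omega : (0:ℤ) < p)
  set θ : ℝ := Real.pi * k / p with hθ
  have hπ := Real.pi_pos
  -- bounds on θ
  have hθ1 : Real.pi / 4 ≤ θ := by
    rw [hθ, div_le_div_iff₀ (by norm_num) hp0]
    have : (p : ℝ) ≤ 4 * k := by exact_mod_cast hA
    nlinarith
  have hθ2 : θ ≤ 2 * Real.pi / 3 := by
    rw [hθ, div_le_div_iff₀ hp0 (by norm_num)]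
    have : (3:ℝ) * k ≤ 2 * p := by exact_mod_cast hB
    nlinarith
  refine ⟨Complex.exp (θ * Complex.I), ?_, Complex.norm_exp_ofReal_mul_I θ, 2 * Real.cos θ, ?_, ?_, ?_⟩
  · rw [← Complex.exp_int_mul]
    have hpe : (p : ℂ) * (θ * Complex.I) = (k : ℂ) * (Real.pi * Complex.I) := by
      rw [hθ]
      have : ((Real.pi * k / p : ℝ) : ℂ) = (Real.pi : ℂ) * k / p := by push_cast; ring
      rw [this]
      have hpc : (p:ℂ) ≠ 0 := by exact_mod_cast (by omega : (p:ℤ) ≠ 0)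
      field_simp
    rw [hpe, Complex.exp_int_mul, Complex.exp_pi_mul_I]
    obtain ⟨m, hm⟩ : ∃ m, q = k + 2 * m := ⟨(q - k) / 2, by omega⟩
    rw [hm, zpow_add₀ (by norm_num : (-1:ℂ) ≠ 0), zpow_mul]
    norm_num
  · rw [← Complex.exp_neg]
    have : -(↑θ * Complex.I) = ((-θ : ℝ) : ℂ) * Complex.I := by push_cast; ring
    rw [this]
    rw [Complex.exp_mul_I, Complex.exp_mul_I]
    push_cast
    simp [Real.cos_neg, Real.sin_neg]
    ring
  · have h1 : Real.cos (2 * Real.pi / 3) ≤ Real.cos θ :=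
      Real.cos_le_cos_of_nonneg_of_le_pi (by positivity) (by linarith) hθ2
    have h2 : Real.cos (2 * Real.pi / 3) = -(1/2) := by
      have : 2 * Real.pi / 3 = Real.pi - Real.pi / 3 := by ring
      rw [this, Real.cos_pi_sub, Real.cos_pi_div_three]
    linarith
  · have h1 : Real.cos θ ≤ Real.cos (Real.pi / 4) :=
      Real.cos_le_cos_of_nonneg_of_le_pi (by positivity) (by linarith) hθ1
    rw [Real.cos_pi_div_four] at h1
    linarith
end

section
/- Let n ≥ 2, let p₁, …, pₙ be integers with each pᵢ ≥ 2, and let q₁, …, qₙ be integers with gcd(pᵢ, qᵢ) = 1 for each i. Let G be the presented group with generators c₁, …, cₙ, h, a and relators a·h·a⁻¹·h, h·cᵢ·h⁻¹·cᵢ⁻¹ (i = 1,…,n), cᵢ^{pᵢ}·h^{qᵢ} (i = 1,…,n), and c₁c₂⋯cₙ·a². Set α := 2cos(q₁π/p₁)cos(q₂π/p₂) and β := 2|sin(q₁π/p₁)sin(q₂π/p₂)|. Then for every real number t with α − β ≤ t ≤ α + β there exists a group homomorphism ρ : G →* SU(2) (SU(2) = Matrix.specialUnitaryGroup (Fin 2)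 ℂ) with trace ρ(c₁c₂) = t. In particular, since β > 0, the set of values trace ρ(c₁c₂) over all homomorphisms ρ : G →* SU(2) is infinite. -/
open Real

/-- The relators of the Jankins–Neumann presentation of a Seifert fibered space over
`ℝP²` with `n` exceptional fibers: generators `c₀, …, c_{n-1}` (the `Sum.inl` generators),
`h = Sum.inr false` and `a = Sum.inr true`, with relators `a h a⁻¹ h`, `h cᵢ h⁻¹ cᵢ⁻¹`,
`cᵢ^{pᵢ} h^{qᵢ}` and `c₀ c₁ ⋯ c_{n-1} a²`. -/
def seifertRelsRP2 (n : ℕ) (p q : Fin n → ℤ) : Set (FreeGroup (Fin n ⊕ Bool)) :=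
  {FreeGroup.of (Sum.inr true) * FreeGroup.of (Sum.inr false) *
      (FreeGroup.of (Sum.inr true))⁻¹ * FreeGroup.of (Sum.inr false)} ∪
    (Set.range fun i : Fin n =>
      FreeGroup.of (Sum.inr false) * FreeGroup.of (Sum.inl i) *
        (FreeGroup.of (Sum.inr false))⁻¹ * (FreeGroup.of (Sum.inl i))⁻¹) ∪
    (Set.range fun i : Fin n =>
      FreeGroup.of (Sum.inl i) ^ p i * FreeGroup.of (Sum.inr false) ^ q i) ∪
    {(List.ofFn fun i : Fin n => FreeGroup.of (Sum.inl i)).prod *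
      FreeGroup.of (Sum.inr true) ^ 2}


open Quaternion Matrix

noncomputable section SRP2Aux

/-- quaternion to 2x2 complex matrix -/
def Q2M (q : ℍ[ℝ]) : Matrix (Fin 2) (Fin 2) ℂ :=
  !![⟨q.re, q.imI⟩, ⟨q.imJ, q.imK⟩; ⟨-q.imJ, q.imK⟩, ⟨q.re, -q.imI⟩]

theorem Q2M_mul (p q : ℍ[ℝ]) : Q2M (p * q) = Q2M p * Q2M q := by
  ext i j
  fin_cases i <;> fin_cases j <;>
    simp [Q2M, Matrix.mul_apply, Fin.sum_univ_two, Complex.ext_iff, Quaternion.re_mul,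
      Quaternion.imI_mul, Quaternion.imJ_mul, Quaternion.imK_mul] <;> constructor <;> ring

theorem Q2M_one : Q2M 1 = 1 := by
  ext i j
  fin_cases i <;> fin_cases j <;> simp [Q2M, Complex.ext_iff, Matrix.one_apply]

theorem Q2M_star (q : ℍ[ℝ]) : Q2M (star q) = (Q2M q)ᴴ := by
  ext i j
  fin_cases i <;> fin_cases j <;> simp [Q2M, Complex.ext_iff]

theorem Q2M_det (q : ℍ[ℝ]) : (Q2M q).det = ((Quaternion.normSq q : ℝ) : ℂ) := by
  simp [Q2M, Matrix.det_fin_two, Complex.ext_iff, Quaternion.normSq_def', ← Complex.ofReal_pow]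
  constructor <;> ring

theorem Q2M_trace (q : ℍ[ℝ]) : (Q2M q).trace = ((2 * q.re : ℝ) : ℂ) := by
  simp [Q2M, Matrix.trace_fin_two, Complex.ext_iff]
  ring

abbrev S3 : Type := Metric.sphere (0 : ℍ[ℝ]) 1

theorem mem_S3_iff (x : ℍ[ℝ]) : x ∈ Metric.sphere (0 : ℍ[ℝ]) 1 ↔ Quaternion.normSq x = 1 := by
  rw [mem_sphere_zero_iff_norm]
  constructor
  · intro h; rw [Quaternion.normSq_eq_norm_mul_self, h, one_mul]
  · intro h
    have h2 := Quaternion.normSq_eq_norm_mul_self x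
    nlinarith [norm_nonneg x]

theorem S3_normSq (u : S3) : Quaternion.normSq (u : ℍ[ℝ]) = 1 := (mem_S3_iff _).mp u.2

theorem S3_ne_zero (u : S3) : (u : ℍ[ℝ]) ≠ 0 := by
  intro h
  have := S3_normSq u
  rw [h] at this
  simp at this

/-- the embedding of unit quaternions into SU(2) -/
def toSU : S3 →* Matrix.specialUnitaryGroup (Fin 2) ℂ where
  toFun u := ⟨Q2M u, by
    rw [Matrix.mem_specialUnitaryGroup_iff]
    constructor
    · rw [Matrix.mem_unitaryGroup_iff]
      show Q2M u * star (Q2M u) = 1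
      have : star (Q2M (u : ℍ[ℝ])) = Q2M (star (u : ℍ[ℝ])) := (Q2M_star _).symm
      rw [this, ← Q2M_mul, Quaternion.self_mul_star, S3_normSq]
      simp only [Quaternion.coe_one, Q2M_one]
    · rw [Q2M_det, S3_normSq]; simp⟩
  map_one' := Subtype.ext Q2M_one
  map_mul' x y := Subtype.ext (Q2M_mul x y)

theorem toSU_trace (u : S3) :
    Matrix.trace ((toSU u : Matrix.specialUnitaryGroup (Fin 2) ℂ) : Matrix (Fin 2) (Fin 2) ℂ)
      = ((2 * (u : ℍ[ℝ]).re : ℝ) : ℂ) := Q2M_trace _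

/-- rotation quaternion -/
def Qrot (θ v1 v2 v3 : ℝ) : ℍ[ℝ] := ⟨Real.cos θ, Real.sin θ * v1, Real.sin θ * v2, Real.sin θ * v3⟩

theorem Qrot_normSq {v1 v2 v3 : ℝ} (hv : v1 ^ 2 + v2 ^ 2 + v3 ^ 2 = 1) (θ : ℝ) :
    Quaternion.normSq (Qrot θ v1 v2 v3) = 1 := by
  rw [Quaternion.normSq_def']; simp only [Qrot]
  have := Real.sin_sq_add_cos_sq θ
  nlinarith [hv]

def rot (θ : ℝ) (v1 v2 v3 : ℝ) (hv : v1 ^ 2 + v2 ^ 2 + v3 ^ 2 = 1) : S3 :=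
  ⟨Qrot θ v1 v2 v3, (mem_S3_iff _).mpr (Qrot_normSq hv θ)⟩

theorem Qrot_mul {v1 v2 v3 : ℝ} (hv : v1 ^ 2 + v2 ^ 2 + v3 ^ 2 = 1) (θ θ' : ℝ) :
    Qrot θ v1 v2 v3 * Qrot θ' v1 v2 v3 = Qrot (θ + θ') v1 v2 v3 := by
  have simp_lemmas := hv
  ext
  · rw [Quaternion.re_mul]; simp only [Qrot, Real.cos_add]
    linear_combination (-(Real.sin θ * Real.sin θ')) * hv
  · rw [Quaternion.imI_mul]; simp only [Qrot, Real.sin_add]; ring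
  · rw [Quaternion.imJ_mul]; simp only [Qrot, Real.sin_add]; ring
  · rw [Quaternion.imK_mul]; simp only [Qrot, Real.sin_add]; ring

theorem rot_mul {v1 v2 v3 : ℝ} (hv : v1 ^ 2 + v2 ^ 2 + v3 ^ 2 = 1) (θ θ' : ℝ) :
    rot θ v1 v2 v3 hv * rot θ' v1 v2 v3 hv = rot (θ + θ') v1 v2 v3 hv :=
  Subtype.ext (Qrot_mul hv θ θ')

theorem rot_zero {v1 v2 v3 : ℝ} (hv : v1 ^ 2 + v2 ^ 2 + v3 ^ 2 = 1) :
    rot 0 v1 v2 v3 hv = 1 := by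
  apply Subtype.ext
  show Qrot 0 v1 v2 v3 = 1
  ext <;> simp [Qrot]

theorem rot_pow {v1 v2 v3 : ℝ} (hv : v1 ^ 2 + v2 ^ 2 + v3 ^ 2 = 1) (θ : ℝ) (m : ℕ) :
    rot θ v1 v2 v3 hv ^ m = rot (m * θ) v1 v2 v3 hv := by
  induction m with
  | zero => simp [rot_zero]
  | succ k ih =>
      rw [pow_succ, ih, rot_mul]
      norm_num
      ring_nf

theorem cos_int_mul_pi (m : ℤ) : Real.cos ((m : ℝ) * Real.pi) = (-1 : ℝ) ^ m := by
  rcases Int.even_or_odd m with ⟨k, hk⟩ | ⟨k, hk⟩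
  · subst hk
    rw [Even.neg_one_zpow ⟨k, rfl⟩]
    push_cast
    rw [show ((k : ℝ) + k) * Real.pi = (k : ℝ) * (2 * Real.pi) by ring]
    exact Real.cos_int_mul_two_pi k
  · subst hk
    rw [Odd.neg_one_zpow ⟨k, rfl⟩]
    push_cast
    rw [show (2 * (k : ℝ) + 1) * Real.pi = (k : ℝ) * (2 * Real.pi) + Real.pi by ring,
      Real.cos_add_pi, Real.cos_int_mul_two_pi]

theorem sin_int_mul_pi' (m : ℤ) : Real.sin ((m : ℝ) * Real.pi) = 0 := Real.sin_int_mul_pi m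

/-- every unit quaternion has a square root -/
theorem S3_exists_sqrt (u : S3) : ∃ r : S3, r * r = u := by
  have hx : (u : ℍ[ℝ]).re ^ 2 + (u : ℍ[ℝ]).imI ^ 2 + (u : ℍ[ℝ]).imJ ^ 2 + (u : ℍ[ℝ]).imK ^ 2 = 1 := by
    have := S3_normSq u
    rwa [Quaternion.normSq_def'] at this
  set w := (u : ℍ[ℝ]).re with hw
  have hw1 : -1 ≤ w := by nlinarith [sq_nonneg ((u:ℍ[ℝ]).imI), sq_nonneg ((u:ℍ[ℝ]).imJ), sq_nonneg ((u:ℍ[ℝ]).imK), sq_nonneg (w+1)]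
  have hw2 : w ≤ 1 := by nlinarith [sq_nonneg ((u:ℍ[ℝ]).imI), sq_nonneg ((u:ℍ[ℝ]).imJ), sq_nonneg ((u:ℍ[ℝ]).imK), sq_nonneg (w-1)]
  set s := Real.sqrt (1 - w ^ 2) with hs
  have hs0 : 0 ≤ s := Real.sqrt_nonneg _
  have hs2 : s ^ 2 = 1 - w ^ 2 := Real.sq_sqrt (by nlinarith)
  have hv : ∀ a b c : ℝ, s * a = (u : ℍ[ℝ]).imI → s * b = (u : ℍ[ℝ]).imJ →
      s * c = (u : ℍ[ℝ]).imK → a ^ 2 + b ^ 2 + c ^ 2 = 1 →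
      ∃ r : S3, r * r = u := by
    intro a b c ha hb hc habc
    refine ⟨rot (Real.arccos w / 2) a b c habc, ?_⟩
    rw [rot_mul]
    apply Subtype.ext
    show Qrot (Real.arccos w / 2 + Real.arccos w / 2) a b c = (u : ℍ[ℝ])
    have harc : Real.arccos w / 2 + Real.arccos w / 2 = Real.arccos w := by ring
    rw [harc]
    have hcos : Real.cos (Real.arccos w) = w := Real.cos_arccos hw1 hw2
    have hsin : Real.sin (Real.arccos w) = s := by rw [Real.sin_arccos]
    ext
    · simpa [Qrot] using hcos
    · simp only [Qrot, hsin]; exact ha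
    · simp only [Qrot, hsin]; exact hb
    · simp only [Qrot, hsin]; exact hc
  by_cases h0 : s = 0
  · have him : (u : ℍ[ℝ]).imI = 0 ∧ (u : ℍ[ℝ]).imJ = 0 ∧ (u : ℍ[ℝ]).imK = 0 := by
      rw [h0] at hs2
      refine ⟨?_, ?_, ?_⟩ <;>
        nlinarith [sq_nonneg ((u:ℍ[ℝ]).imI), sq_nonneg ((u:ℍ[ℝ]).imJ), sq_nonneg ((u:ℍ[ℝ]).imK)]
    exact hv 1 0 0 (by rw [h0, him.1]; ring) (by rw [h0, him.2.1]; ring)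
      (by rw [h0, him.2.2]; ring) (by norm_num)
  · refine hv ((u : ℍ[ℝ]).imI / s) ((u : ℍ[ℝ]).imJ / s) ((u : ℍ[ℝ]).imK / s) ?_ ?_ ?_ ?_
    · field_simp
    · field_simp
    · field_simp
    · field_simp
      nlinarith [hs2]

end SRP2Aux


noncomputable section SRP2Main

def negOneS3 : S3 := ⟨-1, (mem_S3_iff _).mpr (by simp [Quaternion.normSq_def'])⟩

theorem negOneS3_coe : (negOneS3 : ℍ[ℝ]) = -1 := rfl

theorem relator3 {v1 v2 v3 : ℝ} (hv : v1 ^ 2 + v2 ^ 2 + v3 ^ 2 = 1) (pi qi : ℤ)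
    (hpi : 2 ≤ pi) :
    rot ((qi : ℝ) * Real.pi / (pi : ℝ)) v1 v2 v3 hv ^ pi * negOneS3 ^ qi = 1 := by
  have hpi0 : (pi : ℝ) ≠ 0 := Int.cast_ne_zero.mpr (by omega)
  have h1 : rot ((qi : ℝ) * Real.pi / (pi : ℝ)) v1 v2 v3 hv ^ pi
      = rot ((qi : ℝ) * Real.pi) v1 v2 v3 hv := by
    have h2 : rot ((qi : ℝ) * Real.pi / (pi : ℝ)) v1 v2 v3 hv ^ pi
        = rot ((qi : ℝ) * Real.pi / (pi : ℝ)) v1 v2 v3 hv ^ ((pi.toNat : ℕ) : ℤ) := by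
      rw [Int.toNat_of_nonneg (by omega)]
    rw [h2, zpow_natCast, rot_pow]
    congr 1
    have h3 : ((pi.toNat : ℕ) : ℝ) = (pi : ℝ) := by
      exact_mod_cast congrArg (Int.cast : ℤ → ℝ) (Int.toNat_of_nonneg (by omega : (0:ℤ) ≤ pi))
    rw [h3]
    field_simp
  rw [h1]
  apply Subtype.ext
  rw [Metric.unitSphere.coe_mul, Metric.unitSphere.coe_zpow, negOneS3_coe]
  have hsin := Real.sin_int_mul_pi qi
  have hcos := _root_.cos_int_mul_pi qi
  rcases Int.even_or_odd qi with he | ho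
  · rw [he.neg_one_zpow] at hcos
    rw [he.neg_one_zpow]
    have hq : (rot ((qi : ℝ) * Real.pi) v1 v2 v3 hv : ℍ[ℝ]) = 1 := by
      show Qrot ((qi : ℝ) * Real.pi) v1 v2 v3 = 1
      ext <;> simp [Qrot, hsin, hcos]
    rw [hq, one_mul]
    simp
  · rw [ho.neg_one_zpow] at hcos
    rw [ho.neg_one_zpow]
    have hq : (rot ((qi : ℝ) * Real.pi) v1 v2 v3 hv : ℍ[ℝ]) = -1 := by
      show Qrot ((qi : ℝ) * Real.pi) v1 v2 v3 = -1
      ext <;> simp [Qrot, hsin, hcos]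
    rw [hq]
    simp

theorem sin_theta_ne_zero (pk qk : ℤ) (hpk : 2 ≤ pk) (hco : Int.gcd pk qk = 1) :
    Real.sin ((qk : ℝ) * Real.pi / (pk : ℝ)) ≠ 0 := by
  intro h
  rw [Real.sin_eq_zero_iff] at h
  obtain ⟨m, hm⟩ := h
  have hpk0 : (pk : ℝ) ≠ 0 := Int.cast_ne_zero.mpr (by omega)
  have hπ : Real.pi ≠ 0 := Real.pi_ne_zero
  have hr : (m : ℝ) * (pk : ℝ) = (qk : ℝ) := by
    field_simp [hpk0] at hm
    linear_combination hm
  have hz : m * pk = qk := by exact_mod_cast hr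
  have hdvd : pk ∣ qk := ⟨m, by rw [← hz, mul_comm]⟩
  have hg := Int.gcd_eq_left (by omega) hdvd
  rw [hco] at hg
  omega

end SRP2Main


theorem key_lemma (n : ℕ) (p q : Fin n → ℤ) (hp : ∀ i, 2 ≤ p i) (i0 i1 : Fin n)
    (hne : i0 ≠ i1) (x y : ℝ) (hv1 : x ^ 2 + y ^ 2 + 0 ^ 2 = 1) :
    ∃ ρ : PresentedGroup (seifertRelsRP2 n p q) →* Matrix.specialUnitaryGroup (Fin 2) ℂ,
      Matrix.trace
        ((ρ (PresentedGroup.of (Sum.inl i0) * PresentedGroup.of (Sum.inl i1)) :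
          Matrix.specialUnitaryGroup (Fin 2) ℂ) : Matrix (Fin 2) (Fin 2) ℂ)
      = ((2 * (Real.cos ((q i0 : ℝ) * Real.pi / (p i0 : ℝ)) *
            Real.cos ((q i1 : ℝ) * Real.pi / (p i1 : ℝ)) -
          Real.sin ((q i0 : ℝ) * Real.pi / (p i0 : ℝ)) *
            Real.sin ((q i1 : ℝ) * Real.pi / (p i1 : ℝ)) * x) : ℝ) : ℂ) := by
  classical
  have hv0 : (1 : ℝ) ^ 2 + 0 ^ 2 + 0 ^ 2 = 1 := by norm_num
  set θ : Fin n → ℝ := fun k => (q k : ℝ) * Real.pi / (p k : ℝ) with hθ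
  set c : Fin n → S3 :=
    fun k => if k = i1 then rot (θ k) x y 0 hv1 else rot (θ k) 1 0 0 hv0 with hc
  obtain ⟨aa, haa⟩ := S3_exists_sqrt ((List.ofFn c).prod)⁻¹
  set f : Fin n ⊕ Bool → S3 :=
    Sum.elim c (fun b => if b = true then aa else negOneS3) with hf
  have hftrue : f (Sum.inr true) = aa := by rw [hf]; simp
  have hffalse : f (Sum.inr false) = negOneS3 := by rw [hf]; simp
  have hfinl : ∀ i, f (Sum.inl i) = c i := fun i => by rw [hf]; simp
  have hrel : ∀ r ∈ seifertRelsRP2 n p q, FreeGroup.lift f r = 1 := by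
    intro r hr
    rcases hr with ((hr | ⟨i, rfl⟩) | ⟨i, rfl⟩) | hr
    · rw [Set.mem_singleton_iff] at hr
      subst hr
      simp only [_root_.map_mul, _root_.map_inv, FreeGroup.lift_apply_of, hftrue, hffalse]
      apply Subtype.ext
      simp only [Metric.unitSphere.coe_mul, Metric.unitSphere.coe_inv, negOneS3_coe, Metric.unitSphere.coe_one,
        mul_neg_one, neg_mul, neg_neg, mul_inv_cancel₀ (S3_ne_zero aa)]
    · simp only [_root_.map_mul, _root_.map_inv, FreeGroup.lift_apply_of, hffalse, hfinl]
      apply Subtype.ext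
      simp only [Metric.unitSphere.coe_mul, Metric.unitSphere.coe_inv, negOneS3_coe, Metric.unitSphere.coe_one,
        inv_neg_one, neg_one_mul, mul_neg_one, neg_mul, neg_neg, one_mul,
        mul_inv_cancel₀ (S3_ne_zero (c i))]
    · simp only [_root_.map_mul, _root_.map_zpow, FreeGroup.lift_apply_of, hffalse, hfinl]
      by_cases hcase : i = i1
      · have hci : c i = rot (θ i) x y 0 hv1 := by rw [hc]; simp [hcase]
        rw [hci]
        exact relator3 hv1 (p i) (q i) (hp i)
      · have hci : c i = rot (θ i) 1 0 0 hv0 := by rw [hc]; simp [hcase]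
        rw [hci]
        exact relator3 hv0 (p i) (q i) (hp i)
    · rw [Set.mem_singleton_iff] at hr
      subst hr
      rw [_root_.map_mul, _root_.map_pow, FreeGroup.lift_apply_of, hftrue]
      have hP : FreeGroup.lift f (List.ofFn fun i : Fin n => FreeGroup.of (Sum.inl i)).prod
          = (List.ofFn c).prod := by
        rw [map_list_prod, List.map_ofFn]
        have hcomp : (⇑(FreeGroup.lift f) ∘ fun i : Fin n => FreeGroup.of (Sum.inl i)) = c :=
          funext fun i => by
            simp only [Function.comp_apply, FreeGroup.lift_apply_of]
            exact hfinl i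
        rw [hcomp]
      rw [hP, sq, haa]
      simp
  refine ⟨toSU.comp (PresentedGroup.toGroup hrel), ?_⟩
  have hval : (toSU.comp (PresentedGroup.toGroup hrel))
      (PresentedGroup.of (Sum.inl i0) * PresentedGroup.of (Sum.inl i1))
      = toSU (c i0 * c i1) := by
    rw [MonoidHom.comp_apply, _root_.map_mul, PresentedGroup.toGroup.of, PresentedGroup.toGroup.of,
      hfinl, hfinl, _root_.map_mul]
  rw [hval, toSU_trace]
  rw [Complex.ofReal_inj]
  have hc0 : c i0 = rot (θ i0) 1 0 0 hv0 := by rw [hc]; simp [hne]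
  have hc1 : c i1 = rot (θ i1) x y 0 hv1 := by rw [hc]; simp
  rw [Metric.unitSphere.coe_mul, hc0, hc1]
  show 2 * (Qrot (θ i0) 1 0 0 * Qrot (θ i1) x y 0).re = _
  rw [Quaternion.re_mul]
  simp only [Qrot, hθ]
  ring

/-- The `ℝP²`-base case of Proposition 3.1: every `t ∈ [α - β, α + β]` is the trace of
`ρ(c₁c₂)` for some homomorphism `ρ` of the presented group into `SU(2)`; in particular the
set of such traces is infinite. -/
theorem stmt_13 (n : ℕ) (hn : 2 ≤ n) (p q : Fin n → ℤ)
    (hp : ∀ i, 2 ≤ p i) (hco : ∀ i, Int.gcd (p i) (q i) = 1)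
    (α β : ℝ)
    (hα : α = 2 * Real.cos ((q ⟨0, by omega⟩ : ℝ) * π / (p ⟨0, by omega⟩ : ℝ)) *
      Real.cos ((q ⟨1, by omega⟩ : ℝ) * π / (p ⟨1, by omega⟩ : ℝ)))
    (hβ : β = 2 * |Real.sin ((q ⟨0, by omega⟩ : ℝ) * π / (p ⟨0, by omega⟩ : ℝ)) *
      Real.sin ((q ⟨1, by omega⟩ : ℝ) * π / (p ⟨1, by omega⟩ : ℝ))|) :
    (∀ t : ℝ, α - β ≤ t → t ≤ α + β →
      ∃ ρ : PresentedGroup (seifertRelsRP2 n p q) →* Matrix.specialUnitaryGroup (Fin 2) ℂ,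
        Matrix.trace
          ((ρ (PresentedGroup.of (Sum.inl ⟨0, by omega⟩) *
              PresentedGroup.of (Sum.inl ⟨1, by omega⟩)) :
            Matrix.specialUnitaryGroup (Fin 2) ℂ) : Matrix (Fin 2) (Fin 2) ℂ) = (t : ℂ)) ∧
    Set.Infinite {t : ℂ |
      ∃ ρ : PresentedGroup (seifertRelsRP2 n p q) →* Matrix.specialUnitaryGroup (Fin 2) ℂ,
        Matrix.trace
          ((ρ (PresentedGroup.of (Sum.inl ⟨0, by omega⟩) *
              PresentedGroup.of (Sum.inl ⟨1, by omega⟩)) :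
            Matrix.specialUnitaryGroup (Fin 2) ℂ) : Matrix (Fin 2) (Fin 2) ℂ) = t} := by
  have h0n : 0 < n := by omega
  have h1n : 1 < n := by omega
  have hne : (⟨0, h0n⟩ : Fin n) ≠ ⟨1, h1n⟩ := by simp
  set C0 := Real.cos ((q ⟨0, h0n⟩ : ℝ) * Real.pi / (p ⟨0, h0n⟩ : ℝ)) with hC0
  set C1 := Real.cos ((q ⟨1, h1n⟩ : ℝ) * Real.pi / (p ⟨1, h1n⟩ : ℝ)) with hC1
  set S0 := Real.sin ((q ⟨0, h0n⟩ : ℝ) * Real.pi / (p ⟨0, h0n⟩ : ℝ)) with hS0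
  set S1 := Real.sin ((q ⟨1, h1n⟩ : ℝ) * Real.pi / (p ⟨1, h1n⟩ : ℝ)) with hS1
  have hs0 : S0 ≠ 0 := hS0 ▸ sin_theta_ne_zero _ _ (hp _) (hco _)
  have hs1 : S1 ≠ 0 := hS1 ▸ sin_theta_ne_zero _ _ (hp _) (hco _)
  have hS : S0 * S1 ≠ 0 := mul_ne_zero hs0 hs1
  have hα' : α = 2 * C0 * C1 := by rw [hα, hC0, hC1]
  have hβ' : β = 2 * |S0 * S1| := by rw [hβ, hS0, hS1]
  have hβpos : 0 < β := by
    have := abs_pos.mpr hS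
    rw [hβ']
    linarith
  have key : ∀ t : ℝ, α - β ≤ t → t ≤ α + β →
      ∃ ρ : PresentedGroup (seifertRelsRP2 n p q) →* Matrix.specialUnitaryGroup (Fin 2) ℂ,
        Matrix.trace
          ((ρ (PresentedGroup.of (Sum.inl ⟨0, h0n⟩) *
              PresentedGroup.of (Sum.inl ⟨1, h1n⟩)) :
            Matrix.specialUnitaryGroup (Fin 2) ℂ) : Matrix (Fin 2) (Fin 2) ℂ) = (t : ℂ) := by
    intro t ht1 ht2
    rw [hα', hβ'] at ht1 ht2
    set x := (2 * C0 * C1 - t) / (2 * (S0 * S1)) with hx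
    have habs : |2 * C0 * C1 - t| ≤ 2 * |S0 * S1| := abs_le.mpr ⟨by linarith, by linarith⟩
    have hd : (0 : ℝ) < (2 * (S0 * S1)) ^ 2 := by
      have h2 : (2 : ℝ) * (S0 * S1) ≠ 0 := by
        intro h
        apply hS
        linarith [h]
      exact lt_of_le_of_ne (sq_nonneg _) (Ne.symm (pow_ne_zero 2 h2))
    have hx2 : x ^ 2 ≤ 1 := by
      rw [hx, div_pow, div_le_one hd]
      nlinarith [habs, abs_nonneg (2 * C0 * C1 - t), sq_abs (2 * C0 * C1 - t),
        sq_abs (S0 * S1), mul_self_le_mul_self (abs_nonneg (2 * C0 * C1 - t)) habs]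
    set y := Real.sqrt (1 - x ^ 2) with hy
    have hv1 : x ^ 2 + y ^ 2 + 0 ^ 2 = 1 := by
      rw [hy, Real.sq_sqrt (by linarith)]
      ring
    obtain ⟨ρ, hρ⟩ := key_lemma n p q hp ⟨0, h0n⟩ ⟨1, h1n⟩ hne x y hv1
    refine ⟨ρ, ?_⟩
    have h3 : 2 * (C0 * C1 - S0 * S1 * x) = t := by
      rw [hx]
      field_simp
      ring
    have h2 : ((2 * (C0 * C1 - S0 * S1 * x) : ℝ) : ℂ) = (t : ℂ) := by
      rw [h3]
    exact hρ.trans h2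
  refine ⟨fun t ht1 ht2 => key t ht1 ht2, ?_⟩
  have hsub : (fun t : ℝ => (t : ℂ)) '' Set.Icc (α - β) (α + β) ⊆
      {t : ℂ |
        ∃ ρ : PresentedGroup (seifertRelsRP2 n p q) →* Matrix.specialUnitaryGroup (Fin 2) ℂ,
          Matrix.trace
            ((ρ (PresentedGroup.of (Sum.inl ⟨0, h0n⟩) *
                PresentedGroup.of (Sum.inl ⟨1, h1n⟩)) :
              Matrix.specialUnitaryGroup (Fin 2) ℂ) : Matrix (Fin 2) (Fin 2) ℂ) = t} := by
    rintro z ⟨t, ht, rfl⟩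
    obtain ⟨ρ, hρ⟩ := key t ht.1 ht.2
    exact ⟨ρ, hρ⟩
  exact ((Set.Icc_infinite (by linarith)).image
    (fun a _ b _ hab => Complex.ofReal_injective hab)).mono hsub
end

section
/- Let p₁, p₂, p₃ ≥ 1 and q₁, q₂, q₃ be integers with D := q₁p₂p₃ + p₁q₂p₃ + p₁p₂q₃ ≠ 0. Let G be the presented group with generators c₁, c₂, c₃, h and relators cᵢ·h·cᵢ⁻¹·h⁻¹ (i = 1, 2, 3), cᵢ^{pᵢ}·h^{qᵢ} (i = 1, 2, 3), and c₁c₂c₃. Let ρ : G →* SL(2, ℂ) be a homomorphism such that ρ(h) and all ρ(cᵢ) are diagonal matrices and ρ(h)² = 1. Then: (i) if ρ(cᵢ)² = 1 for some i ∈ {1, 2, 3}, every Ad ρ-cocycle is an Ad ρ-coboundary; (ii) if ρ(cᵢ)² ≠ 1 for all i ∈ {1, 2, 3}, there exists an Ad ρ-cocycle that is not an Ad ρ-coboundary. -/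
open Matrix

/-- An `Ad ρ`-cocycle: a traceless-matrix-valued function `ε` on `G` satisfying the
twisted cocycle condition `ε(g₁g₂) = ε(g₁) + ρ(g₁) ε(g₂) ρ(g₁)⁻¹`. -/
def IsAdCocycle {G : Type*} [Group G] (ρ : G →* Matrix.SpecialLinearGroup (Fin 2) ℂ)
    (ε : G → Matrix (Fin 2) (Fin 2) ℂ) : Prop :=
  (∀ g, Matrix.trace (ε g) = 0) ∧
    ∀ g₁ g₂, ε (g₁ * g₂) =
      ε g₁ + (ρ g₁ : Matrix (Fin 2) (Fin 2) ℂ) * ε g₂ *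
        ((ρ g₁)⁻¹ : Matrix.SpecialLinearGroup (Fin 2) ℂ)

/-- An `Ad ρ`-coboundary: `ε(g) = X - ρ(g) X ρ(g)⁻¹` for a fixed traceless matrix `X`. -/
def IsAdCoboundary {G : Type*} [Group G] (ρ : G →* Matrix.SpecialLinearGroup (Fin 2) ℂ)
    (ε : G → Matrix (Fin 2) (Fin 2) ℂ) : Prop :=
  ∃ X : Matrix (Fin 2) (Fin 2) ℂ, Matrix.trace X = 0 ∧
    ∀ g, ε g = X - (ρ g : Matrix (Fin 2) (Fin 2) ℂ) * X *
      ((ρ g)⁻¹ : Matrix.SpecialLinearGroup (Fin 2) ℂ)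

/-- The relators of the Jankins–Neumann presentation of `π₁(M(S²; q₁/p₁, q₂/p₂, q₃/p₃))`:
generators `c₀, c₁, c₂` (the `Sum.inl` generators) and `h` (the `Sum.inr` generator), with
relators `cᵢ h cᵢ⁻¹ h⁻¹`, `cᵢ^{pᵢ} h^{qᵢ}` and `c₀ c₁ c₂`. -/
def seifertRels (p₁ p₂ p₃ q₁ q₂ q₃ : ℤ) : Set (FreeGroup (Fin 3 ⊕ Unit)) :=
  {FreeGroup.of (Sum.inl 0) * FreeGroup.of (Sum.inr ()) * (FreeGroup.of (Sum.inl 0))⁻¹ *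
      (FreeGroup.of (Sum.inr ()))⁻¹,
    FreeGroup.of (Sum.inl 1) * FreeGroup.of (Sum.inr ()) * (FreeGroup.of (Sum.inl 1))⁻¹ *
      (FreeGroup.of (Sum.inr ()))⁻¹,
    FreeGroup.of (Sum.inl 2) * FreeGroup.of (Sum.inr ()) * (FreeGroup.of (Sum.inl 2))⁻¹ *
      (FreeGroup.of (Sum.inr ()))⁻¹,
    FreeGroup.of (Sum.inl 0) ^ p₁ * FreeGroup.of (Sum.inr ()) ^ q₁,
    FreeGroup.of (Sum.inl 1) ^ p₂ * FreeGroup.of (Sum.inr ()) ^ q₂,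
    FreeGroup.of (Sum.inl 2) ^ p₃ * FreeGroup.of (Sum.inr ()) ^ q₃,
    FreeGroup.of (Sum.inl 0) * FreeGroup.of (Sum.inl 1) * FreeGroup.of (Sum.inl 2)}


namespace Stmt14Aux

abbrev M2 := Matrix (Fin 2) (Fin 2) ℂ
abbrev SL2 := Matrix.SpecialLinearGroup (Fin 2) ℂ





lemma rel_one {α : Type*} (rels : Set (FreeGroup α)) {r} (hr : r ∈ rels) :
    PresentedGroup.mk rels r = 1 :=
  (QuotientGroup.eq_one_iff r).2 (Subgroup.subset_normalClosure hr)

lemma diag_coe (A : SL2) (hA : Matrix.IsDiag (A : M2)) :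
    (A : M2) = !![(A : M2) 0 0, 0; 0, (A : M2) 1 1] := by
  ext i j
  fin_cases i <;> fin_cases j <;>
    simp [hA (by decide : (0:Fin 2) ≠ 1), hA (by decide : (1:Fin 2) ≠ 0)]

lemma diag_det (A : SL2) (hA : Matrix.IsDiag (A : M2)) :
    (A : M2) 0 0 * (A : M2) 1 1 = 1 := by
  have h := A.2
  rw [Matrix.det_fin_two] at h
  rw [hA (by decide : (0:Fin 2) ≠ 1), hA (by decide : (1:Fin 2) ≠ 0)] at h
  simpa using h

lemma inv_coe_diag (A : SL2) (hA : Matrix.IsDiag (A : M2)) :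
    ((A⁻¹ : SL2) : M2) = !![(A : M2) 1 1, 0; 0, (A : M2) 0 0] := by
  rw [Matrix.SpecialLinearGroup.coe_inv, Matrix.adjugate_fin_two]
  rw [hA (by decide : (0:Fin 2) ≠ 1), hA (by decide : (1:Fin 2) ≠ 0)]
  simp

lemma conj_entries (A : SL2) (hA : Matrix.IsDiag (A : M2)) (M : M2) :
    (A : M2) * M * ((A⁻¹ : SL2) : M2) =
      !![M 0 0, (A : M2) 0 0 ^ 2 * M 0 1; (A : M2) 1 1 ^ 2 * M 1 0, M 1 1] := by
  have hd := diag_det A hA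
  have hM : M = !![M 0 0, M 0 1; M 1 0, M 1 1] := by
    ext i j; fin_cases i <;> fin_cases j <;> simp
  rw [inv_coe_diag A hA]
  nth_rewrite 1 [diag_coe A hA]
  nth_rewrite 1 [hM]
  rw [Matrix.mul_fin_two, Matrix.mul_fin_two]
  ext i j
  fin_cases i <;> fin_cases j <;> simp <;>
    first
      | linear_combination M 0 0 * hd
      | linear_combination M 1 1 * hd
      | ring

lemma pow_coe_diag (A : SL2) (hA : Matrix.IsDiag (A : M2)) (n : ℕ) :
    ((A ^ n : SL2) : M2) = !![(A : M2) 0 0 ^ n, 0; 0, (A : M2) 1 1 ^ n] := by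
  induction n with
  | zero => simp; ext i j; fin_cases i <;> fin_cases j <;> simp
  | succ n ih =>
    have : ((A ^ (n+1) : SL2) : M2) = ((A ^ n : SL2) : M2) * (A : M2) := by
      rw [pow_succ]; rfl
    rw [this, ih, diag_coe A hA, Matrix.mul_fin_two]
    ext i j; fin_cases i <;> fin_cases j <;> simp [pow_succ]

lemma pow_isDiag (A : SL2) (hA : Matrix.IsDiag (A : M2)) (n : ℕ) :
    Matrix.IsDiag ((A ^ n : SL2) : M2) := by
  rw [pow_coe_diag A hA]
  intro i j hij
  fin_cases i <;> fin_cases j <;> simp_all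



lemma coe_mul_inv (A : SL2) : (A : M2) * ((A⁻¹ : SL2) : M2) = 1 := by
  rw [← Matrix.SpecialLinearGroup.coe_mul, mul_inv_cancel,
    Matrix.SpecialLinearGroup.coe_one]

lemma coe_inv_mul (A : SL2) : ((A⁻¹ : SL2) : M2) * (A : M2) = 1 := by
  rw [← Matrix.SpecialLinearGroup.coe_mul, inv_mul_cancel,
    Matrix.SpecialLinearGroup.coe_one]

variable {G : Type*} [Group G] (ρ : G →* SL2) (ε : G → M2)

lemma eps_one (hc : IsAdCocycle ρ ε) : ε 1 = 0 := by
  have h := hc.2 1 1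
  simp only [mul_one, _root_.map_one, inv_one, Matrix.SpecialLinearGroup.coe_one, one_mul] at h
  have : ε 1 + ε 1 = ε 1 + 0 := by rw [add_zero]; exact h.symm
  exact (add_left_cancel this)

lemma eps_inv (hc : IsAdCocycle ρ ε) (g : G) :
    ε g⁻¹ = -((((ρ g)⁻¹ : SL2) : M2) * ε g * ((ρ g : SL2) : M2)) := by
  have h0 := hc.2 g g⁻¹
  rw [mul_inv_cancel, eps_one ρ ε hc] at h0
  have h1 : (ρ g : M2) * ε g⁻¹ * (((ρ g)⁻¹ : SL2) : M2) = -ε g := by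
    have := h0.symm
    linear_combination (norm := noncomm_ring) this
  have h2 : (((ρ g)⁻¹ : SL2) : M2) * ((ρ g : M2) * ε g⁻¹ * (((ρ g)⁻¹ : SL2) : M2)) * (ρ g : M2)
      = (((ρ g)⁻¹ : SL2) : M2) * (-ε g) * (ρ g : M2) := by rw [h1]
  calc ε g⁻¹ = ((((ρ g)⁻¹ : SL2) : M2) * (ρ g : M2)) * ε g⁻¹ *
        ((((ρ g)⁻¹ : SL2) : M2) * (ρ g : M2)) := by rw [coe_inv_mul]; simp
    _ = (((ρ g)⁻¹ : SL2) : M2) * ((ρ g : M2) * ε g⁻¹ * (((ρ g)⁻¹ : SL2) : M2)) * (ρ g : M2) := by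
        noncomm_ring
    _ = -((((ρ g)⁻¹ : SL2) : M2) * ε g * ((ρ g : SL2) : M2)) := by rw [h1]; noncomm_ring

lemma cocycle_ext {α : Type*} {rels : Set (FreeGroup α)}
    (ρ : PresentedGroup rels →* SL2) (ε ε' : PresentedGroup rels → M2)
    (hc : IsAdCocycle ρ ε) (hc' : IsAdCocycle ρ ε')
    (hgen : ∀ x, ε (PresentedGroup.of x) = ε' (PresentedGroup.of x)) : ∀ g, ε g = ε' g := by
  have key : ∀ w : FreeGroup α,
      ε (PresentedGroup.mk rels w) = ε' (PresentedGroup.mk rels w) := by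
    intro w
    induction w using FreeGroup.induction_on with
    | C1 => rw [_root_.map_one, eps_one ρ ε hc, eps_one ρ ε' hc']
    | of x => exact hgen x
    | inv_of x ih => rw [_root_.map_inv, eps_inv ρ ε hc, eps_inv ρ ε' hc', ih]
    | mul x y ihx ihy => rw [_root_.map_mul, hc.2, hc'.2, ihx, ihy]
  intro g
  induction g using PresentedGroup.induction_on with
  | _ w => exact key w





lemma geom_zero {t : ℂ} (ht : t ≠ 1) {P : ℕ} (hP : t ^ P = 1) :
    ∑ k ∈ Finset.range P, t ^ k = 0 := by
  rw [geom_sum_eq ht, hP, sub_self, zero_div]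

lemma two_case (t s a b : ℂ) (hts : t * s = 1) (ht : t ≠ 1) (hab : a + t * b = 0) :
    a / (1 - t) * (1 - s) = b := by
  have h1 : (1:ℂ) - t ≠ 0 := sub_ne_zero.mpr (Ne.symm ht)
  field_simp
  linear_combination (1 - s) * hab + b * hts

lemma keyAlg (t₀ t₁ t₂ x₀ x₁ x₂ y : ℂ) (P₀ P₁ P₂ : ℕ) (q₀ q₁ q₂ : ℤ)
    (hP₀ : (P₀:ℂ) ≠ 0) (hP₁ : (P₁:ℂ) ≠ 0) (hP₂ : (P₂:ℂ) ≠ 0)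
    (hDc : (q₀:ℂ) * P₁ * P₂ + P₀ * q₁ * P₂ + P₀ * P₁ * q₂ ≠ 0)
    (hprod : t₀ * t₁ * t₂ = 1)
    (ht₀P : t₀ ^ P₀ = 1) (ht₁P : t₁ ^ P₁ = 1) (ht₂P : t₂ ^ P₂ = 1)
    (hcm₀ : t₀ * y = y) (hcm₁ : t₁ * y = y) (hcm₂ : t₂ * y = y)
    (hpw₀ : x₀ * (∑ k ∈ Finset.range P₀, t₀ ^ k) + q₀ * y = 0)
    (hpw₁ : x₁ * (∑ k ∈ Finset.range P₁, t₁ ^ k) + q₁ * y = 0)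
    (hpw₂ : x₂ * (∑ k ∈ Finset.range P₂, t₂ ^ k) + q₂ * y = 0)
    (hsum : x₀ + t₀ * x₁ + t₀ * t₁ * x₂ = 0)
    (hone : t₀ = 1 ∨ t₁ = 1 ∨ t₂ = 1) :
    y = 0 ∧ ∃ x : ℂ, x₀ = x * (1 - t₀) ∧ x₁ = x * (1 - t₁) ∧ x₂ = x * (1 - t₂) := by
  by_cases h0 : t₀ = 1
  · by_cases h1 : t₁ = 1
    · -- all trivial
      have h2 : t₂ = 1 := by rw [h0, h1] at hprod; simpa using hprod
      subst h0; subst h1; subst h2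
      simp only [one_pow, Finset.sum_const, Finset.card_range, nsmul_eq_mul, mul_one,
        one_mul] at hpw₀ hpw₁ hpw₂ hsum
      have hy : ((q₀:ℂ) * P₁ * P₂ + P₀ * q₁ * P₂ + P₀ * P₁ * q₂) * y = 0 := by
        linear_combination (P₁:ℂ) * P₂ * hpw₀ + (P₀:ℂ) * P₂ * hpw₁ + (P₀:ℂ) * P₁ * hpw₂
          - (P₀:ℂ) * P₁ * P₂ * hsum
      have hy0 : y = 0 := by
        rcases mul_eq_zero.mp hy with h | h
        · exact absurd h hDc
        · exact h
      subst hy0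
      refine ⟨rfl, 0, ?_, ?_, ?_⟩ <;>
        [ (have := hpw₀); (have := hpw₁); (have := hpw₂) ] <;>
        simp only [mul_zero, add_zero] at this <;>
        rcases mul_eq_zero.mp this with h | h <;>
        simp_all
    · -- t₀ = 1, t₁ ≠ 1 (hence t₂ ≠ 1)
      have h12 : t₁ * t₂ = 1 := by rw [h0] at hprod; simpa using hprod
      have h2 : t₂ ≠ 1 := fun h => h1 (by rw [h] at h12; simpa using h12)
      have hy : y = 0 := by
        have := sub_eq_zero.mpr hcm₁
        have h' : (t₁ - 1) * y = 0 := by linear_combination hcm₁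
        rcases mul_eq_zero.mp h' with h | h
        · exact absurd (by linear_combination h) h1
        · exact h
      subst hy
      have hx0 : x₀ = 0 := by
        rw [h0] at hpw₀
        simp only [one_pow, Finset.sum_const, Finset.card_range, nsmul_eq_mul, mul_one,
          mul_zero, add_zero] at hpw₀
        rcases mul_eq_zero.mp hpw₀ with h | h
        · exact h
        · exact absurd h hP₀
      have hsum' : x₁ + t₁ * x₂ = 0 := by rw [h0, hx0] at hsum; linear_combination hsum
      refine ⟨rfl, x₁ / (1 - t₁), ?_, ?_, ?_⟩
      · rw [h0, hx0]; ring
      · have h1' : (1:ℂ) - t₁ ≠ 0 := sub_ne_zero.mpr (Ne.symm h1)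
        field_simp
      · exact (two_case t₁ t₂ x₁ x₂ h12 h1 hsum').symm
  · by_cases h1 : t₁ = 1
    · -- t₁ = 1, t₀ ≠ 1, t₂ ≠ 1
      have h02 : t₀ * t₂ = 1 := by rw [h1] at hprod; simpa using hprod
      have h2 : t₂ ≠ 1 := fun h => h0 (by rw [h] at h02; simpa using h02)
      have hy : y = 0 := by
        have h' : (t₀ - 1) * y = 0 := by linear_combination hcm₀
        rcases mul_eq_zero.mp h' with h | h
        · exact absurd (by linear_combination h) h0
        · exact h
      subst hy
      have hx1 : x₁ = 0 := by
        rw [h1] at hpw₁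
        simp only [one_pow, Finset.sum_const, Finset.card_range, nsmul_eq_mul, mul_one,
          mul_zero, add_zero] at hpw₁
        rcases mul_eq_zero.mp hpw₁ with h | h
        · exact h
        · exact absurd h hP₁
      have hsum' : x₀ + t₀ * x₂ = 0 := by rw [h1, hx1] at hsum; linear_combination hsum
      refine ⟨rfl, x₀ / (1 - t₀), ?_, ?_, ?_⟩
      · have h0' : (1:ℂ) - t₀ ≠ 0 := sub_ne_zero.mpr (Ne.symm h0)
        field_simp
      · rw [h1, hx1]; ring
      · exact (two_case t₀ t₂ x₀ x₂ h02 h0 hsum').symm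
    · -- t₂ = 1, t₀ ≠ 1, t₁ ≠ 1
      have h2 : t₂ = 1 := (hone.resolve_left h0).resolve_left h1
      have h01 : t₀ * t₁ = 1 := by rw [h2] at hprod; simpa using hprod
      have hy : y = 0 := by
        have h' : (t₀ - 1) * y = 0 := by linear_combination hcm₀
        rcases mul_eq_zero.mp h' with h | h
        · exact absurd (by linear_combination h) h0
        · exact h
      subst hy
      have hx2 : x₂ = 0 := by
        rw [h2] at hpw₂
        simp only [one_pow, Finset.sum_const, Finset.card_range, nsmul_eq_mul, mul_one,
          mul_zero, add_zero] at hpw₂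
        rcases mul_eq_zero.mp hpw₂ with h | h
        · exact h
        · exact absurd h hP₂
      have hsum' : x₀ + t₀ * x₁ = 0 := by rw [hx2] at hsum; linear_combination hsum
      refine ⟨rfl, x₀ / (1 - t₀), ?_, ?_, ?_⟩
      · have h0' : (1:ℂ) - t₀ ≠ 0 := sub_ne_zero.mpr (Ne.symm h0)
        field_simp
      · exact (two_case t₀ t₁ x₀ x₁ h01 h0 hsum').symm
      · rw [h2, hx2]; ring



lemma scalar_conj (A : SL2) (ζ : ℂ) (hA : (A : M2) = ζ • (1 : M2)) (hζ : ζ * ζ = 1)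
    (M : M2) : (A : M2) * M * ((A⁻¹ : SL2) : M2) = M := by
  have hinv : ((A⁻¹ : SL2) : M2) = ζ • (1 : M2) := by
    have h1 : (A : M2) * ((A⁻¹ : SL2) : M2) = 1 := coe_mul_inv A
    rw [hA, smul_mul_assoc, one_mul] at h1
    calc ((A⁻¹ : SL2) : M2) = (ζ * ζ) • ((A⁻¹ : SL2) : M2) := by rw [hζ, one_smul]
      _ = ζ • (ζ • ((A⁻¹ : SL2) : M2)) := by rw [smul_smul]
      _ = ζ • (1 : M2) := by rw [h1]
  rw [hA, hinv, smul_mul_assoc, one_mul, mul_smul_comm, mul_one, smul_smul, hζ, one_smul]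

lemma cobound_cocycle {G : Type*} [Group G] (ρ : G →* SL2) (X : M2)
    (hX : Matrix.trace X = 0) :
    IsAdCocycle ρ (fun g => X - (ρ g : M2) * X * ((ρ g)⁻¹ : SL2)) := by
  constructor
  · intro g
    simp only [Matrix.trace_sub]
    rw [Matrix.trace_mul_cycle, coe_inv_mul, one_mul, sub_self]
  · intro g₁ g₂
    have e1 : ((ρ (g₁ * g₂)) : M2) = (ρ g₁ : M2) * (ρ g₂ : M2) := by
      rw [_root_.map_mul, Matrix.SpecialLinearGroup.coe_mul]
    have e2 : (((ρ (g₁ * g₂))⁻¹ : SL2) : M2) =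
        ((ρ g₂)⁻¹ : SL2) * ((ρ g₁)⁻¹ : SL2) := by
      rw [_root_.map_mul, _root_.mul_inv_rev, Matrix.SpecialLinearGroup.coe_mul]
    simp only
    rw [e1, e2]
    have h1 : (ρ g₁ : M2) * ((ρ g₁)⁻¹ : SL2) = 1 := coe_mul_inv (ρ g₁)
    have expand : (ρ g₁ : M2) * (X - (ρ g₂ : M2) * X * ((ρ g₂)⁻¹ : SL2)) * ((ρ g₁)⁻¹ : SL2)
        = (ρ g₁ : M2) * X * ((ρ g₁)⁻¹ : SL2)
          - ((ρ g₁ : M2) * (ρ g₂ : M2)) * X * (((ρ g₂)⁻¹ : SL2) * ((ρ g₁)⁻¹ : SL2)) := by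
      noncomm_ring
    rw [expand]
    noncomm_ring

lemma mul_diag_coe (A B : SL2) (hA : Matrix.IsDiag (A : M2)) (hB : Matrix.IsDiag (B : M2)) :
    ((A * B : SL2) : M2) =
      !![(A : M2) 0 0 * (B : M2) 0 0, 0; 0, (A : M2) 1 1 * (B : M2) 1 1] := by
  rw [Matrix.SpecialLinearGroup.coe_mul]
  nth_rewrite 1 [diag_coe A hA]
  nth_rewrite 1 [diag_coe B hB]
  rw [Matrix.mul_fin_two]
  ext i j; fin_cases i <;> fin_cases j <;> simp

lemma mul_isDiag (A B : SL2) (hA : Matrix.IsDiag (A : M2)) (hB : Matrix.IsDiag (B : M2)) :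
    Matrix.IsDiag ((A * B : SL2) : M2) := by
  rw [mul_diag_coe A B hA hB]
  intro i j hij
  fin_cases i <;> fin_cases j <;> simp_all

lemma eps_zpow {G : Type*} [Group G] (ρ : G →* SL2) (ε : G → M2) (hc : IsAdCocycle ρ ε)
    (g : G) (ζ : ℂ) (hζ : ζ * ζ = 1) (hg2 : (ρ g) ^ 2 = 1)
    (hA : ((ρ g : SL2) : M2) = ζ • (1 : M2)) :
    ∀ q : ℤ, ε (g ^ q) = (q : ℂ) • ε g := by
  have hinv : (ρ g)⁻¹ = ρ g := by
    apply inv_eq_of_mul_eq_one_right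
    rw [← sq]; exact hg2
  have key : ∀ B : SL2, (B = 1 ∨ B = ρ g) → ∀ M : M2, (B : M2) * M * ((B⁻¹ : SL2) : M2) = M := by
    rintro B (rfl | rfl) M
    · simp
    · exact scalar_conj _ ζ hA hζ M
  have hmem : ∀ n : ℕ, (ρ g) ^ n = 1 ∨ (ρ g) ^ n = ρ g := by
    intro n
    rcases Nat.even_or_odd n with ⟨k, hk⟩ | ⟨k, hk⟩
    · left
      rw [hk, ← two_mul, pow_mul, hg2, one_pow]
    · right
      rw [hk, pow_succ, pow_mul, hg2, one_pow, one_mul]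
  have Hn : ∀ n : ℕ, ε (g ^ n) = (n : ℂ) • ε g := by
    intro n
    induction n with
    | zero => simp [eps_one ρ ε hc]
    | succ n ih =>
      rw [pow_succ, hc.2, ih]
      have : ((ρ (g ^ n)) : M2) * ε g * (((ρ (g ^ n))⁻¹ : SL2) : M2) = ε g := by
        apply key
        rw [map_pow]; exact hmem n
      rw [this]
      push_cast
      rw [add_smul, one_smul]
  intro q
  rcases q with n | n
  · rw [Int.ofNat_eq_natCast, zpow_natCast, Hn n]; norm_num
  · rw [zpow_negSucc, eps_inv ρ ε hc]
    have hB : (ρ (g ^ (n + 1)))⁻¹ = 1 ∨ (ρ (g ^ (n + 1)))⁻¹ = ρ g := by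
      rw [map_pow]
      rcases hmem (n + 1) with h | h
      · left; rw [h, inv_one]
      · right; rw [h, hinv]
    have hconj := key ((ρ (g ^ (n + 1)))⁻¹) hB (ε (g ^ (n + 1)))
    rw [inv_inv] at hconj
    rw [hconj, Hn (n + 1)]
    rw [Int.cast_negSucc]
    push_cast
    rw [neg_smul]

lemma eps_pow_entries {G : Type*} [Group G] (ρ : G →* SL2) (ε : G → M2)
    (hc : IsAdCocycle ρ ε) (g : G) (hA : Matrix.IsDiag ((ρ g : SL2) : M2)) (n : ℕ) :
    ε (g ^ n) = !![(n : ℂ) * ε g 0 0,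
        ε g 0 1 * ∑ k ∈ Finset.range n, (((ρ g : SL2) : M2) 0 0 ^ 2) ^ k;
        ε g 1 0 * ∑ k ∈ Finset.range n, (((ρ g : SL2) : M2) 1 1 ^ 2) ^ k,
        (n : ℂ) * ε g 1 1] := by
  induction n with
  | zero =>
    rw [pow_zero, eps_one ρ ε hc]
    ext i j; fin_cases i <;> fin_cases j <;> simp
  | succ n ih =>
    rw [pow_succ, hc.2, ih]
    have hdiagn : Matrix.IsDiag (((ρ g) ^ n : SL2) : M2) := pow_isDiag _ hA n
    have hρn : ρ (g ^ n) = (ρ g) ^ n := map_pow ρ g n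
    rw [hρn, conj_entries ((ρ g) ^ n) hdiagn (ε g), pow_coe_diag (ρ g) hA n]
    have e00 : (!![((ρ g : SL2) : M2) 0 0 ^ n, 0; 0, ((ρ g : SL2) : M2) 1 1 ^ n] : M2) 0 0
        = ((ρ g : SL2) : M2) 0 0 ^ n := by simp
    have e11 : (!![((ρ g : SL2) : M2) 0 0 ^ n, 0; 0, ((ρ g : SL2) : M2) 1 1 ^ n] : M2) 1 1
        = ((ρ g : SL2) : M2) 1 1 ^ n := by simp
    have hsq : ∀ x : ℂ, x ^ n * x ^ n = (x ^ 2) ^ n := fun x => by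
      rw [← pow_add, ← two_mul, pow_mul]
    ext i j
    fin_cases i <;> fin_cases j <;>
      simp [Finset.sum_range_succ, pow_succ, hsq] <;> ring

noncomputable def affU (t a : ℂ) (h : t ≠ 0) : M2ˣ where
  val := !![t, a; 0, 1]
  inv := !![t⁻¹, -(a / t); 0, 1]
  val_inv := by
    rw [Matrix.mul_fin_two]
    ext i j; fin_cases i <;> fin_cases j <;> simp <;> field_simp <;> ring
  inv_val := by
    rw [Matrix.mul_fin_two]
    ext i j; fin_cases i <;> fin_cases j <;> simp <;> field_simp <;> ring

@[simp] lemma affU_coe (t a : ℂ) (h : t ≠ 0) : ((affU t a h : M2ˣ) : M2) = !![t, a; 0, 1] := rfl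

lemma aff_mat_pow (t a : ℂ) (n : ℕ) :
    (!![t, a; 0, 1] : M2) ^ n = !![t ^ n, a * ∑ k ∈ Finset.range n, t ^ k; 0, 1] := by
  induction n with
  | zero =>
    ext i j; fin_cases i <;> fin_cases j <;> simp
  | succ n ih =>
    rw [pow_succ, ih, Matrix.mul_fin_two]
    ext i j; fin_cases i <;> fin_cases j <;>
      simp [Finset.sum_range_succ, pow_succ] <;> ring


lemma isDiag_two (x y : ℂ) : Matrix.IsDiag (!![x, 0; 0, y]) := by
  intro i j hij
  fin_cases i <;> fin_cases j
  · exact absurd rfl hij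
  · simp
  · simp
  · exact absurd rfl hij

lemma order2_zpow {H : Type*} [Group H] (x : H) (hx : x ^ 2 = 1) (q : ℤ) :
    x ^ q = 1 ∨ x ^ q = x := by
  have h2 : x ^ (2:ℤ) = 1 := by
    rw [show (2:ℤ) = ((2:ℕ):ℤ) by norm_num, zpow_natCast, hx]
  rcases Int.even_or_odd q with ⟨k, hk⟩ | ⟨k, hk⟩
  · left; rw [hk, ← two_mul, _root_.zpow_mul, h2, _root_.one_zpow]
  · right; rw [hk, _root_.zpow_add, _root_.zpow_mul, h2, _root_.one_zpow, one_mul, _root_.zpow_one]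

end Stmt14Aux

set_option maxHeartbeats 2000000 in
open Stmt14Aux in
private lemma stmt14_main (p₁ p₂ p₃ q₁ q₂ q₃ : ℤ)
    (hp₁ : 1 ≤ p₁) (hp₂ : 1 ≤ p₂) (hp₃ : 1 ≤ p₃)
    (hD : q₁ * p₂ * p₃ + p₁ * q₂ * p₃ + p₁ * p₂ * q₃ ≠ 0)
    (ρ : PresentedGroup (seifertRels p₁ p₂ p₃ q₁ q₂ q₃) →*
      Matrix.SpecialLinearGroup (Fin 2) ℂ)
    (hdiagh : Matrix.IsDiag
      ((ρ (PresentedGroup.of (Sum.inr ())) : Matrix.SpecialLinearGroup (Fin 2) ℂ) :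
        Matrix (Fin 2) (Fin 2) ℂ))
    (hdiagc : ∀ i : Fin 3, Matrix.IsDiag
      ((ρ (PresentedGroup.of (Sum.inl i)) : Matrix.SpecialLinearGroup (Fin 2) ℂ) :
        Matrix (Fin 2) (Fin 2) ℂ))
    (hh : ρ (PresentedGroup.of (Sum.inr ())) ^ 2 = 1) :
    ((∃ i : Fin 3, ρ (PresentedGroup.of (Sum.inl i)) ^ 2 = 1) →
      ∀ ε, IsAdCocycle ρ ε → IsAdCoboundary ρ ε) ∧
    ((∀ i : Fin 3, ρ (PresentedGroup.of (Sum.inl i)) ^ 2 ≠ 1) →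
      ∃ ε, IsAdCocycle ρ ε ∧ ¬ IsAdCoboundary ρ ε) := by
  classical
  set cg : Fin 3 → PresentedGroup (seifertRels p₁ p₂ p₃ q₁ q₂ q₃) :=
    fun i => PresentedGroup.of (Sum.inl i) with hcg_def
  set hgg : PresentedGroup (seifertRels p₁ p₂ p₃ q₁ q₂ q₃) :=
    PresentedGroup.of (Sum.inr ()) with hhgg_def
  have hdc : ∀ i, Matrix.IsDiag ((ρ (cg i) : SL2) : M2) := hdiagc
  have hdh : Matrix.IsDiag ((ρ hgg : SL2) : M2) := hdiagh
  have hρh2 : ρ hgg ^ 2 = 1 := hh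
  set pI : Fin 3 → ℤ := ![p₁, p₂, p₃] with hpI_def
  set qI : Fin 3 → ℤ := ![q₁, q₂, q₃] with hqI_def
  set PN : Fin 3 → ℕ := fun i => (pI i).toNat with hPN_def
  have hPcast : ∀ i, ((PN i : ℕ) : ℤ) = pI i := by
    intro i
    fin_cases i <;> simp [hPN_def, hpI_def] <;> omega
  have hPNne : ∀ i, PN i ≠ 0 := by
    intro i
    fin_cases i <;> simp [hPN_def, hpI_def] <;> omega
  have grel : ∀ r ∈ seifertRels p₁ p₂ p₃ q₁ q₂ q₃,
      PresentedGroup.mk (seifertRels p₁ p₂ p₃ q₁ q₂ q₃) r = 1 :=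
    fun r hr => rel_one _ hr
  have Hcomm : ∀ i : Fin 3, cg i * hgg = hgg * cg i := by
    intro i
    fin_cases i
    · have h := grel (FreeGroup.of (Sum.inl 0) * FreeGroup.of (Sum.inr ()) *
        (FreeGroup.of (Sum.inl 0))⁻¹ * (FreeGroup.of (Sum.inr ()))⁻¹) (by simp [seifertRels])
      simp only [_root_.map_mul, _root_.map_inv] at h
      exact mul_inv_eq_iff_eq_mul.mp (_root_.mul_inv_eq_one.mp h)
    · have h := grel (FreeGroup.of (Sum.inl 1) * FreeGroup.of (Sum.inr ()) *
        (FreeGroup.of (Sum.inl 1))⁻¹ * (FreeGroup.of (Sum.inr ()))⁻¹) (by simp [seifertRels])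
      simp only [_root_.map_mul, _root_.map_inv] at h
      exact mul_inv_eq_iff_eq_mul.mp (_root_.mul_inv_eq_one.mp h)
    · have h := grel (FreeGroup.of (Sum.inl 2) * FreeGroup.of (Sum.inr ()) *
        (FreeGroup.of (Sum.inl 2))⁻¹ * (FreeGroup.of (Sum.inr ()))⁻¹) (by simp [seifertRels])
      simp only [_root_.map_mul, _root_.map_inv] at h
      exact mul_inv_eq_iff_eq_mul.mp (_root_.mul_inv_eq_one.mp h)
  have Hpow : ∀ i : Fin 3, cg i ^ (PN i) * hgg ^ (qI i) = 1 := by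
    intro i
    fin_cases i
    · have h := grel (FreeGroup.of (Sum.inl 0) ^ p₁ * FreeGroup.of (Sum.inr ()) ^ q₁)
        (by simp [seifertRels])
      simp only [_root_.map_mul, _root_.map_zpow] at h
      show cg 0 ^ (PN 0) * hgg ^ (qI 0) = 1
      rw [← _root_.zpow_natCast (cg 0) (PN 0), hPcast 0]
      exact h
    · have h := grel (FreeGroup.of (Sum.inl 1) ^ p₂ * FreeGroup.of (Sum.inr ()) ^ q₂)
        (by simp [seifertRels])
      simp only [_root_.map_mul, _root_.map_zpow] at h
      show cg 1 ^ (PN 1) * hgg ^ (qI 1) = 1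
      rw [← _root_.zpow_natCast (cg 1) (PN 1), hPcast 1]
      exact h
    · have h := grel (FreeGroup.of (Sum.inl 2) ^ p₃ * FreeGroup.of (Sum.inr ()) ^ q₃)
        (by simp [seifertRels])
      simp only [_root_.map_mul, _root_.map_zpow] at h
      show cg 2 ^ (PN 2) * hgg ^ (qI 2) = 1
      rw [← _root_.zpow_natCast (cg 2) (PN 2), hPcast 2]
      exact h
  have Hprod : cg 0 * cg 1 * cg 2 = 1 := by
    have h := grel (FreeGroup.of (Sum.inl 0) * FreeGroup.of (Sum.inl 1) *
      FreeGroup.of (Sum.inl 2)) (by simp [seifertRels])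
    simp only [_root_.map_mul] at h
    exact h
  -- scalar structure of ρ(h)
  have hη2 : ((ρ hgg : SL2) : M2) 0 0 ^ 2 = 1 := by
    have h : ((ρ hgg ^ 2 : SL2) : M2) = 1 := by
      rw [hρh2, Matrix.SpecialLinearGroup.coe_one]
    rw [pow_coe_diag _ hdh 2] at h
    have := congrFun (congrFun h 0) 0
    simpa using this
  have hdeth := diag_det _ hdh
  have hd11 : ((ρ hgg : SL2) : M2) 1 1 = ((ρ hgg : SL2) : M2) 0 0 := by
    linear_combination ((ρ hgg : SL2) : M2) 0 0 * hdeth - ((ρ hgg : SL2) : M2) 1 1 * hη2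
  have hηη : ((ρ hgg : SL2) : M2) 0 0 * ((ρ hgg : SL2) : M2) 0 0 = 1 := by
    linear_combination hη2
  have hHs : ((ρ hgg : SL2) : M2) = ((ρ hgg : SL2) : M2) 0 0 • (1 : M2) := by
    rw [diag_coe _ hdh, hd11]
    ext r s
    fin_cases r <;> fin_cases s <;> simp [Matrix.one_apply]
  have hkey : ∀ B : SL2, (B = 1 ∨ B = ρ hgg) →
      ∀ M : M2, (B : M2) * M * ((B⁻¹ : SL2) : M2) = M := by
    rintro B (rfl | rfl) M
    · simp
    · exact scalar_conj _ _ hHs hηη M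
  have Hρpow : ∀ i, (ρ (cg i)) ^ (PN i) = (ρ hgg ^ (qI i))⁻¹ := by
    intro i
    have h := congrArg ρ (Hpow i)
    rw [_root_.map_mul, _root_.map_pow, _root_.map_zpow, _root_.map_one] at h
    exact mul_eq_one_iff_eq_inv.mp h
  have hmemB : ∀ i, (ρ hgg ^ (qI i))⁻¹ = 1 ∨ (ρ hgg ^ (qI i))⁻¹ = ρ hgg := by
    intro i
    have := order2_zpow (ρ hgg) hρh2 (-(qI i))
    rwa [_root_.zpow_neg] at this
  have htP : ∀ i, (((ρ (cg i) : SL2) : M2) 0 0 ^ 2) ^ (PN i) = 1 ∧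
      (((ρ (cg i) : SL2) : M2) 1 1 ^ 2) ^ (PN i) = 1 := by
    intro i
    have hsc : ∃ ζ : ℂ, ζ * ζ = 1 ∧ (((ρ hgg ^ (qI i))⁻¹ : SL2) : M2) = ζ • (1 : M2) := by
      rcases hmemB i with hB | hB
      · exact ⟨1, by norm_num, by rw [hB]; simp⟩
      · exact ⟨_, hηη, by rw [hB]; exact hHs⟩
    obtain ⟨ζ, hζ1, hζ2⟩ := hsc
    have h : ((ρ (cg i) ^ (PN i) : SL2) : M2) = ζ • (1 : M2) := by rw [Hρpow i]; exact hζ2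
    rw [pow_coe_diag _ (hdc i)] at h
    have e1 : ((ρ (cg i) : SL2) : M2) 0 0 ^ (PN i) = ζ := by
      have := congrFun (congrFun h 0) 0
      simpa [Matrix.one_apply] using this
    have e2 : ((ρ (cg i) : SL2) : M2) 1 1 ^ (PN i) = ζ := by
      have := congrFun (congrFun h 1) 1
      simpa [Matrix.one_apply] using this
    constructor
    · rw [← pow_mul, Nat.mul_comm, pow_mul, e1, pow_two]
      exact hζ1
    · rw [← pow_mul, Nat.mul_comm, pow_mul, e2, pow_two]
      exact hζ1
  have haaa : ((ρ (cg 0) : SL2) : M2) 0 0 * ((ρ (cg 1) : SL2) : M2) 0 0 *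
        ((ρ (cg 2) : SL2) : M2) 0 0 = 1 ∧
      ((ρ (cg 0) : SL2) : M2) 1 1 * ((ρ (cg 1) : SL2) : M2) 1 1 *
        ((ρ (cg 2) : SL2) : M2) 1 1 = 1 := by
    have hgp : ρ (cg 0) * ρ (cg 1) * ρ (cg 2) = 1 := by
      rw [← _root_.map_mul, ← _root_.map_mul, Hprod, _root_.map_one]
    have h : ((ρ (cg 0) * ρ (cg 1) * ρ (cg 2) : SL2) : M2) = 1 := by
      rw [hgp, Matrix.SpecialLinearGroup.coe_one]
    rw [mul_diag_coe _ _ (mul_isDiag _ _ (hdc 0) (hdc 1)) (hdc 2)] at h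
    have e00 : ((ρ (cg 0) * ρ (cg 1) : SL2) : M2) 0 0 =
        ((ρ (cg 0) : SL2) : M2) 0 0 * ((ρ (cg 1) : SL2) : M2) 0 0 := by
      rw [mul_diag_coe _ _ (hdc 0) (hdc 1)]; simp
    have e11 : ((ρ (cg 0) * ρ (cg 1) : SL2) : M2) 1 1 =
        ((ρ (cg 0) : SL2) : M2) 1 1 * ((ρ (cg 1) : SL2) : M2) 1 1 := by
      rw [mul_diag_coe _ _ (hdc 0) (hdc 1)]; simp
    constructor
    · have h0 := congrFun (congrFun h 0) 0
      rw [e00] at h0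
      simpa [Matrix.one_apply] using h0
    · have h0 := congrFun (congrFun h 1) 1
      rw [e11] at h0
      simpa [Matrix.one_apply] using h0
  have hprod_t : ((ρ (cg 0) : SL2) : M2) 0 0 ^ 2 * ((ρ (cg 1) : SL2) : M2) 0 0 ^ 2 *
      ((ρ (cg 2) : SL2) : M2) 0 0 ^ 2 = 1 := by
    linear_combination (((ρ (cg 0) : SL2) : M2) 0 0 * ((ρ (cg 1) : SL2) : M2) 0 0 *
      ((ρ (cg 2) : SL2) : M2) 0 0 + 1) * haaa.1
  have hprod_s : ((ρ (cg 0) : SL2) : M2) 1 1 ^ 2 * ((ρ (cg 1) : SL2) : M2) 1 1 ^ 2 *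
      ((ρ (cg 2) : SL2) : M2) 1 1 ^ 2 = 1 := by
    linear_combination (((ρ (cg 0) : SL2) : M2) 1 1 * ((ρ (cg 1) : SL2) : M2) 1 1 *
      ((ρ (cg 2) : SL2) : M2) 1 1 + 1) * haaa.2
  have hcastPC : ∀ i, ((PN i : ℕ) : ℂ) = ((pI i : ℤ) : ℂ) := by
    intro i
    exact_mod_cast congrArg (fun z : ℤ => (z : ℂ)) (hPcast i)
  have hDc : ((qI 0 : ℂ) * (PN 1 : ℂ) * (PN 2 : ℂ) + (PN 0 : ℂ) * (qI 1 : ℂ) * (PN 2 : ℂ) +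
      (PN 0 : ℂ) * (PN 1 : ℂ) * (qI 2 : ℂ)) ≠ 0 := by
    have key : (qI 0 : ℂ) * (PN 1 : ℂ) * (PN 2 : ℂ) + (PN 0 : ℂ) * (qI 1 : ℂ) * (PN 2 : ℂ) +
        (PN 0 : ℂ) * (PN 1 : ℂ) * (qI 2 : ℂ)
        = ((q₁ * p₂ * p₃ + p₁ * q₂ * p₃ + p₁ * p₂ * q₃ : ℤ) : ℂ) := by
      rw [hcastPC 0, hcastPC 1, hcastPC 2]
      simp only [hpI_def, hqI_def]
      norm_num [Matrix.cons_val_two, Matrix.tail_cons, Matrix.head_cons]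
    rw [key]
    intro hx
    exact hD (by exact_mod_cast hx)
  have han : ∀ i, ((ρ (cg i) : SL2) : M2) 0 0 ≠ 0 :=
    fun i => left_ne_zero_of_mul_eq_one (diag_det _ (hdc i))
  constructor
  · -- part (i)
    rintro ⟨j, hj⟩ ε hc
    have hj' : ρ (cg j) ^ 2 = 1 := hj
    have htr : ∀ g, ε g 1 1 = -(ε g 0 0) := by
      intro g
      have := hc.1 g
      rw [Matrix.trace_fin_two] at this
      linear_combination this
    have hεh : ∀ q : ℤ, ε (hgg ^ q) = (q : ℂ) • ε hgg :=
      eps_zpow ρ ε hc hgg _ hηη hρh2 hHs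
    have hC1 : ∀ i, ((ρ (cg i) : SL2) : M2) 0 0 ^ 2 * ε hgg 0 1 = ε hgg 0 1 ∧
        ((ρ (cg i) : SL2) : M2) 1 1 ^ 2 * ε hgg 1 0 = ε hgg 1 0 := by
      intro i
      have h1 : ε (cg i * hgg) = ε (hgg * cg i) := by rw [Hcomm i]
      rw [hc.2 (cg i) hgg, hc.2 hgg (cg i), hkey (ρ hgg) (Or.inr rfl)] at h1
      have h2 : ((ρ (cg i) : SL2) : M2) * ε hgg * (((ρ (cg i))⁻¹ : SL2) : M2) = ε hgg := by
        have h3 : ε (cg i) + ((ρ (cg i) : SL2) : M2) * ε hgg * (((ρ (cg i))⁻¹ : SL2) : M2)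
            = ε (cg i) + ε hgg := by rw [h1, add_comm]
        exact add_left_cancel h3
      rw [conj_entries _ (hdc i)] at h2
      constructor
      · have := congrFun (congrFun h2 0) 1
        simpa using this
      · have := congrFun (congrFun h2 1) 0
        simpa using this
    have hC2 : ∀ i,
        (PN i : ℂ) * ε (cg i) 0 0 + (qI i : ℂ) * ε hgg 0 0 = 0 ∧
        ε (cg i) 0 1 * (∑ k ∈ Finset.range (PN i), (((ρ (cg i) : SL2) : M2) 0 0 ^ 2) ^ k) +
          (qI i : ℂ) * ε hgg 0 1 = 0 ∧
        ε (cg i) 1 0 * (∑ k ∈ Finset.range (PN i), (((ρ (cg i) : SL2) : M2) 1 1 ^ 2) ^ k) +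
          (qI i : ℂ) * ε hgg 1 0 = 0 := by
      intro i
      have h0 : ε (cg i ^ (PN i) * hgg ^ (qI i)) = 0 := by
        rw [Hpow i]; exact eps_one ρ ε hc
      rw [hc.2] at h0
      have hB : ρ (cg i ^ PN i) = (ρ hgg ^ qI i)⁻¹ := by rw [_root_.map_pow]; exact Hρpow i
      have hconj : ((ρ (cg i ^ PN i) : SL2) : M2) * ε (hgg ^ qI i) *
          (((ρ (cg i ^ PN i))⁻¹ : SL2) : M2) = ε (hgg ^ qI i) := by
        rw [hB]; exact hkey _ (hmemB i) _
      rw [hconj, hεh, eps_pow_entries ρ ε hc _ (hdc i)] at h0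
      refine ⟨?_, ?_, ?_⟩
      · have h' := congrFun (congrFun h0 0) 0
        simp [Matrix.add_apply, Matrix.smul_apply, smul_eq_mul] at h'
        linear_combination h'
      · have h' := congrFun (congrFun h0 0) 1
        simp [Matrix.add_apply, Matrix.smul_apply, smul_eq_mul] at h'
        linear_combination h'
      · have h' := congrFun (congrFun h0 1) 0
        simp [Matrix.add_apply, Matrix.smul_apply, smul_eq_mul] at h'
        linear_combination h'
    have hC3 : ε (cg 0) 0 0 + ε (cg 1) 0 0 + ε (cg 2) 0 0 = 0 ∧
        ε (cg 0) 0 1 + ((ρ (cg 0) : SL2) : M2) 0 0 ^ 2 * ε (cg 1) 0 1 +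
          ((ρ (cg 0) : SL2) : M2) 0 0 ^ 2 * ((ρ (cg 1) : SL2) : M2) 0 0 ^ 2 * ε (cg 2) 0 1 = 0 ∧
        ε (cg 0) 1 0 + ((ρ (cg 0) : SL2) : M2) 1 1 ^ 2 * ε (cg 1) 1 0 +
          ((ρ (cg 0) : SL2) : M2) 1 1 ^ 2 * ((ρ (cg 1) : SL2) : M2) 1 1 ^ 2 * ε (cg 2) 1 0 = 0 := by
      have h0 : ε (cg 0 * cg 1 * cg 2) = 0 := by rw [Hprod]; exact eps_one ρ ε hc
      rw [hc.2 (cg 0 * cg 1) (cg 2), hc.2 (cg 0) (cg 1), _root_.map_mul,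
        conj_entries _ (hdc 0), conj_entries _ (mul_isDiag _ _ (hdc 0) (hdc 1))] at h0
      have e00 : ((ρ (cg 0) * ρ (cg 1) : SL2) : M2) 0 0 =
          ((ρ (cg 0) : SL2) : M2) 0 0 * ((ρ (cg 1) : SL2) : M2) 0 0 := by
        rw [mul_diag_coe _ _ (hdc 0) (hdc 1)]; simp
      have e11 : ((ρ (cg 0) * ρ (cg 1) : SL2) : M2) 1 1 =
          ((ρ (cg 0) : SL2) : M2) 1 1 * ((ρ (cg 1) : SL2) : M2) 1 1 := by
        rw [mul_diag_coe _ _ (hdc 0) (hdc 1)]; simp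
      refine ⟨?_, ?_, ?_⟩
      · have h' := congrFun (congrFun h0 0) 0
        simp [Matrix.add_apply] at h'
        linear_combination h'
      · have h' := congrFun (congrFun h0 0) 1
        rw [e00] at h'
        simp [Matrix.add_apply] at h'
        linear_combination h'
      · have h' := congrFun (congrFun h0 1) 0
        rw [e11] at h'
        simp [Matrix.add_apply] at h'
        linear_combination h'
    have hdh0 : ε hgg 0 0 = 0 := by
      have e0 := (hC2 0).1
      have e1 := (hC2 1).1
      have e2 := (hC2 2).1
      have es := hC3.1
      have hz : ((qI 0 : ℂ) * (PN 1 : ℂ) * (PN 2 : ℂ) + (PN 0 : ℂ) * (qI 1 : ℂ) * (PN 2 : ℂ) +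
          (PN 0 : ℂ) * (PN 1 : ℂ) * (qI 2 : ℂ)) * ε hgg 0 0 = 0 := by
        linear_combination (PN 1 : ℂ) * (PN 2 : ℂ) * e0 + (PN 0 : ℂ) * (PN 2 : ℂ) * e1 +
          (PN 0 : ℂ) * (PN 1 : ℂ) * e2 - (PN 0 : ℂ) * (PN 1 : ℂ) * (PN 2 : ℂ) * es
      rcases mul_eq_zero.mp hz with h | h
      · exact absurd h hDc
      · exact h
    have hdd : ∀ i, ε (cg i) 0 0 = 0 := by
      intro i
      have e := (hC2 i).1
      rw [hdh0, mul_zero, add_zero] at e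
      rcases mul_eq_zero.mp e with h | h
      · exact absurd h (Nat.cast_ne_zero.mpr (hPNne i))
      · exact h
    have hja : ((ρ (cg j) : SL2) : M2) 0 0 ^ 2 = 1 ∧ ((ρ (cg j) : SL2) : M2) 1 1 ^ 2 = 1 := by
      have h : ((ρ (cg j) ^ 2 : SL2) : M2) = 1 := by
        rw [hj', Matrix.SpecialLinearGroup.coe_one]
      rw [pow_coe_diag _ (hdc j) 2] at h
      constructor
      · have := congrFun (congrFun h 0) 0
        simpa [Matrix.one_apply] using this
      · have := congrFun (congrFun h 1) 1
        simpa [Matrix.one_apply] using this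
    have honeu : ((ρ (cg 0) : SL2) : M2) 0 0 ^ 2 = 1 ∨ ((ρ (cg 1) : SL2) : M2) 0 0 ^ 2 = 1 ∨
        ((ρ (cg 2) : SL2) : M2) 0 0 ^ 2 = 1 := by
      fin_cases j
      · exact Or.inl hja.1
      · exact Or.inr (Or.inl hja.1)
      · exact Or.inr (Or.inr hja.1)
    have honel : ((ρ (cg 0) : SL2) : M2) 1 1 ^ 2 = 1 ∨ ((ρ (cg 1) : SL2) : M2) 1 1 ^ 2 = 1 ∨
        ((ρ (cg 2) : SL2) : M2) 1 1 ^ 2 = 1 := by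
      fin_cases j
      · exact Or.inl hja.2
      · exact Or.inr (Or.inl hja.2)
      · exact Or.inr (Or.inr hja.2)
    obtain ⟨huh0, xp, hu0, hu1, hu2⟩ :=
      keyAlg _ _ _ _ _ _ _ (PN 0) (PN 1) (PN 2) (qI 0) (qI 1) (qI 2)
        (Nat.cast_ne_zero.mpr (hPNne 0)) (Nat.cast_ne_zero.mpr (hPNne 1))
        (Nat.cast_ne_zero.mpr (hPNne 2)) hDc hprod_t (htP 0).1 (htP 1).1 (htP 2).1
        (hC1 0).1 (hC1 1).1 (hC1 2).1 (hC2 0).2.1 (hC2 1).2.1 (hC2 2).2.1 hC3.2.1 honeu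
    obtain ⟨hlh0, xm, hl0, hl1, hl2⟩ :=
      keyAlg _ _ _ _ _ _ _ (PN 0) (PN 1) (PN 2) (qI 0) (qI 1) (qI 2)
        (Nat.cast_ne_zero.mpr (hPNne 0)) (Nat.cast_ne_zero.mpr (hPNne 1))
        (Nat.cast_ne_zero.mpr (hPNne 2)) hDc hprod_s (htP 0).2 (htP 1).2 (htP 2).2
        (hC1 0).2 (hC1 1).2 (hC1 2).2 (hC2 0).2.2 (hC2 1).2.2 (hC2 2).2.2 hC3.2.2 honel
    have hufun : ∀ i, ε (cg i) 0 1 = xp * (1 - ((ρ (cg i) : SL2) : M2) 0 0 ^ 2) := by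
      intro i
      fin_cases i
      · exact hu0
      · exact hu1
      · exact hu2
    have hlfun : ∀ i, ε (cg i) 1 0 = xm * (1 - ((ρ (cg i) : SL2) : M2) 1 1 ^ 2) := by
      intro i
      fin_cases i
      · exact hl0
      · exact hl1
      · exact hl2
    have hXtr : Matrix.trace (!![(0 : ℂ), xp; xm, 0] : M2) = 0 := by
      simp [Matrix.trace_fin_two]
    have hc' := cobound_cocycle ρ !![(0 : ℂ), xp; xm, 0] hXtr
    refine ⟨!![(0 : ℂ), xp; xm, 0], hXtr, fun g => ?_⟩
    refine cocycle_ext ρ ε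
      (fun g => !![(0 : ℂ), xp; xm, 0] -
        (ρ g : M2) * !![(0 : ℂ), xp; xm, 0] * ((ρ g)⁻¹ : SL2)) hc hc' ?_ g
    rintro (i | u)
    · show ε (cg i) = !![(0 : ℂ), xp; xm, 0] -
        ((ρ (cg i) : SL2) : M2) * !![(0 : ℂ), xp; xm, 0] * (((ρ (cg i))⁻¹ : SL2) : M2)
      rw [conj_entries _ (hdc i)]
      ext r s
      fin_cases r <;> fin_cases s
      · simp only [Matrix.sub_apply]
        simp
        exact hdd i
      · simp only [Matrix.sub_apply]
        simp
        rw [hufun i]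
        ring
      · simp only [Matrix.sub_apply]
        simp
        rw [hlfun i]
        ring
      · simp only [Matrix.sub_apply]
        simp
        rw [htr, hdd i]
        ring
    · show ε hgg = !![(0 : ℂ), xp; xm, 0] -
        ((ρ hgg : SL2) : M2) * !![(0 : ℂ), xp; xm, 0] * (((ρ hgg)⁻¹ : SL2) : M2)
      rw [hkey (ρ hgg) (Or.inr rfl), sub_self]
      ext r s
      fin_cases r <;> fin_cases s
      · simpa using hdh0
      · simpa using huh0
      · simpa using hlh0
      · simp
        rw [htr, hdh0]
        ring
  · -- part (ii)
    intro hall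
    have htne1 : ∀ i, ((ρ (cg i) : SL2) : M2) 0 0 ^ 2 ≠ 1 := by
      intro i h
      apply hall i
      have hdet := diag_det _ (hdc i)
      have hd2 : ((ρ (cg i) : SL2) : M2) 1 1 ^ 2 = 1 := by
        linear_combination (-(((ρ (cg i) : SL2) : M2) 1 1 ^ 2)) * h +
          (((ρ (cg i) : SL2) : M2) 0 0 * ((ρ (cg i) : SL2) : M2) 1 1 + 1) * hdet
      have hm : ((ρ (cg i) ^ 2 : SL2) : M2) = ((1 : SL2) : M2) := by
        rw [pow_coe_diag _ (hdc i) 2, Matrix.SpecialLinearGroup.coe_one]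
        ext r s
        fin_cases r <;> fin_cases s <;> simp [h, hd2, Matrix.one_apply]
      exact Subtype.coe_injective hm
    have htn0 : ∀ i, ((ρ (cg i) : SL2) : M2) 0 0 ^ 2 ≠ 0 := fun i => pow_ne_zero 2 (han i)
    set ga : Fin 3 → ℂ := ![1, -(((ρ (cg 0) : SL2) : M2) 0 0 ^ 2)⁻¹, 0] with hga_def
    set f : Fin 3 ⊕ Unit → M2ˣ :=
      Sum.elim (fun i => affU (((ρ (cg i) : SL2) : M2) 0 0 ^ 2) (ga i) (htn0 i))
        (fun _ => 1) with hf_def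
    have hUpow : ∀ i, f (Sum.inl i) ^ (PN i) = 1 := by
      intro i
      apply Units.ext
      rw [Units.val_pow_eq_pow_val]
      simp only [hf_def, Sum.elim_inl, affU_coe]
      rw [aff_mat_pow, geom_zero (htne1 i) (htP i).1, (htP i).1]
      rw [Units.val_one]
      ext r s
      fin_cases r <;> fin_cases s <;> simp [Matrix.one_apply]
    have hrels : ∀ r ∈ seifertRels p₁ p₂ p₃ q₁ q₂ q₃, FreeGroup.lift f r = 1 := by
      intro r hr
      simp only [seifertRels, Set.mem_insert_iff, Set.mem_singleton_iff] at hr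
      rcases hr with rfl | rfl | rfl | rfl | rfl | rfl | rfl
      · simp only [_root_.map_mul, _root_.map_inv, FreeGroup.lift_apply_of]
        rw [show f (Sum.inr ()) = 1 from rfl]
        group
      · simp only [_root_.map_mul, _root_.map_inv, FreeGroup.lift_apply_of]
        rw [show f (Sum.inr ()) = 1 from rfl]
        group
      · simp only [_root_.map_mul, _root_.map_inv, FreeGroup.lift_apply_of]
        rw [show f (Sum.inr ()) = 1 from rfl]
        group
      · simp only [_root_.map_mul, _root_.map_zpow, FreeGroup.lift_apply_of]
        rw [show f (Sum.inr ()) = 1 from rfl, _root_.one_zpow, mul_one]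
        have hp : p₁ = ((PN 0 : ℕ) : ℤ) := by rw [hPcast 0]; simp [hpI_def]
        rw [hp, _root_.zpow_natCast]
        exact hUpow 0
      · simp only [_root_.map_mul, _root_.map_zpow, FreeGroup.lift_apply_of]
        rw [show f (Sum.inr ()) = 1 from rfl, _root_.one_zpow, mul_one]
        have hp : p₂ = ((PN 1 : ℕ) : ℤ) := by rw [hPcast 1]; simp [hpI_def]
        rw [hp, _root_.zpow_natCast]
        exact hUpow 1
      · simp only [_root_.map_mul, _root_.map_zpow, FreeGroup.lift_apply_of]
        rw [show f (Sum.inr ()) = 1 from rfl, _root_.one_zpow, mul_one]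
        have hp : p₃ = ((PN 2 : ℕ) : ℤ) := by rw [hPcast 2]; simp [hpI_def]
        rw [hp, _root_.zpow_natCast]
        exact hUpow 2
      · simp only [_root_.map_mul, FreeGroup.lift_apply_of]
        apply Units.ext
        rw [Units.val_mul, Units.val_mul]
        simp only [hf_def, Sum.elim_inl, affU_coe]
        rw [Matrix.mul_fin_two, Matrix.mul_fin_two, Units.val_one]
        ext r s
        fin_cases r <;> fin_cases s
        · simpa [Matrix.one_apply] using hprod_t
        · simp [hga_def, Matrix.one_apply]
          rw [mul_inv_cancel₀ (htn0 0)]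
          ring
        · simp [Matrix.one_apply]
        · simp [Matrix.one_apply]
      -- done
    set φ : PresentedGroup (seifertRels p₁ p₂ p₃ q₁ q₂ q₃) →* M2ˣ :=
      PresentedGroup.toGroup hrels with hφ_def
    have hφof : ∀ x, φ (PresentedGroup.of x) = f x := fun x => PresentedGroup.toGroup.of hrels
    have hinv : ∀ g : PresentedGroup (seifertRels p₁ p₂ p₃ q₁ q₂ q₃),
        Matrix.IsDiag ((ρ g : SL2) : M2) ∧ ((φ g : M2ˣ) : M2) 1 0 = 0 ∧
          ((φ g : M2ˣ) : M2) 1 1 = 1 ∧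
          ((φ g : M2ˣ) : M2) 0 0 = ((ρ g : SL2) : M2) 0 0 ^ 2 := by
      have step_mul : ∀ g₁ g₂ : PresentedGroup (seifertRels p₁ p₂ p₃ q₁ q₂ q₃),
          (Matrix.IsDiag ((ρ g₁ : SL2) : M2) ∧ ((φ g₁ : M2ˣ) : M2) 1 0 = 0 ∧
            ((φ g₁ : M2ˣ) : M2) 1 1 = 1 ∧
            ((φ g₁ : M2ˣ) : M2) 0 0 = ((ρ g₁ : SL2) : M2) 0 0 ^ 2) →
          (Matrix.IsDiag ((ρ g₂ : SL2) : M2) ∧ ((φ g₂ : M2ˣ) : M2) 1 0 = 0 ∧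
            ((φ g₂ : M2ˣ) : M2) 1 1 = 1 ∧
            ((φ g₂ : M2ˣ) : M2) 0 0 = ((ρ g₂ : SL2) : M2) 0 0 ^ 2) →
          (Matrix.IsDiag ((ρ (g₁ * g₂) : SL2) : M2) ∧ ((φ (g₁ * g₂) : M2ˣ) : M2) 1 0 = 0 ∧
            ((φ (g₁ * g₂) : M2ˣ) : M2) 1 1 = 1 ∧
            ((φ (g₁ * g₂) : M2ˣ) : M2) 0 0 = ((ρ (g₁ * g₂) : SL2) : M2) 0 0 ^ 2) := by
        rintro g₁ g₂ ⟨hd1, h10a, h11a, h00a⟩ ⟨hd2, h10b, h11b, h00b⟩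
        have hρm : ρ (g₁ * g₂) = ρ g₁ * ρ g₂ := _root_.map_mul ρ _ _
        have hφm : ((φ (g₁ * g₂) : M2ˣ) : M2) = ((φ g₁ : M2ˣ) : M2) * ((φ g₂ : M2ˣ) : M2) := by
          rw [_root_.map_mul, Units.val_mul]
        refine ⟨?_, ?_, ?_, ?_⟩
        · rw [hρm]; exact mul_isDiag _ _ hd1 hd2
        · rw [hφm, Matrix.mul_apply, Fin.sum_univ_two, h10a, h10b]; ring
        · rw [hφm, Matrix.mul_apply, Fin.sum_univ_two, h10a, h11a, h11b]; ring
        · have e00 : ((ρ g₁ * ρ g₂ : SL2) : M2) 0 0 =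
              ((ρ g₁ : SL2) : M2) 0 0 * ((ρ g₂ : SL2) : M2) 0 0 := by
            rw [mul_diag_coe _ _ hd1 hd2]; simp
          rw [hφm, Matrix.mul_apply, Fin.sum_univ_two, h00a, h00b, h10b, hρm, e00]; ring
      have step_inv : ∀ g : PresentedGroup (seifertRels p₁ p₂ p₃ q₁ q₂ q₃),
          (Matrix.IsDiag ((ρ g : SL2) : M2) ∧ ((φ g : M2ˣ) : M2) 1 0 = 0 ∧
            ((φ g : M2ˣ) : M2) 1 1 = 1 ∧
            ((φ g : M2ˣ) : M2) 0 0 = ((ρ g : SL2) : M2) 0 0 ^ 2) →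
          (Matrix.IsDiag ((ρ g⁻¹ : SL2) : M2) ∧ ((φ g⁻¹ : M2ˣ) : M2) 1 0 = 0 ∧
            ((φ g⁻¹ : M2ˣ) : M2) 1 1 = 1 ∧
            ((φ g⁻¹ : M2ˣ) : M2) 0 0 = ((ρ g⁻¹ : SL2) : M2) 0 0 ^ 2) := by
        rintro g ⟨hd1, h10, h11, h00⟩
        have hρi : ρ g⁻¹ = (ρ g)⁻¹ := _root_.map_inv ρ g
        have hdet1 := diag_det _ hd1
        have hane : ((ρ g : SL2) : M2) 0 0 ≠ 0 := left_ne_zero_of_mul_eq_one hdet1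
        have hdinv : Matrix.IsDiag (((ρ g)⁻¹ : SL2) : M2) := by
          rw [inv_coe_diag _ hd1]
          exact isDiag_two _ _
        have hVW : ((((φ g)⁻¹ : M2ˣ)) : M2) * ((φ g : M2ˣ) : M2) = 1 := by
          rw [← Units.val_mul, inv_mul_cancel, Units.val_one]
        have hφi : ((φ g⁻¹ : M2ˣ) : M2) = (((φ g)⁻¹ : M2ˣ) : M2) := by rw [_root_.map_inv]
        have w10 := congrFun (congrFun hVW 1) 0
        rw [Matrix.mul_apply, Fin.sum_univ_two, h10, h00] at w10
        have w10' : (((φ g)⁻¹ : M2ˣ) : M2) 1 0 * (((ρ g : SL2) : M2) 0 0 ^ 2) = 0 := by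
          simpa [Matrix.one_apply] using w10
        have hV10 : (((φ g)⁻¹ : M2ˣ) : M2) 1 0 = 0 := by
          rcases mul_eq_zero.mp w10' with h | h
          · exact h
          · exact absurd h (pow_ne_zero 2 hane)
        have w11 := congrFun (congrFun hVW 1) 1
        rw [Matrix.mul_apply, Fin.sum_univ_two, hV10, h11] at w11
        have hV11 : (((φ g)⁻¹ : M2ˣ) : M2) 1 1 = 1 := by
          simpa [Matrix.one_apply] using w11
        have w00 := congrFun (congrFun hVW 0) 0
        rw [Matrix.mul_apply, Fin.sum_univ_two, h00, h10] at w00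
        have hV00 : (((φ g)⁻¹ : M2ˣ) : M2) 0 0 * (((ρ g : SL2) : M2) 0 0 ^ 2) = 1 := by
          simpa [Matrix.one_apply] using w00
        refine ⟨by rw [hρi]; exact hdinv, by rw [hφi]; exact hV10,
          by rw [hφi]; exact hV11, ?_⟩
        rw [hφi, hρi, inv_coe_diag _ hd1]
        have e : (!![((ρ g : SL2) : M2) 1 1, 0; 0, ((ρ g : SL2) : M2) 0 0] : M2) 0 0 =
            ((ρ g : SL2) : M2) 1 1 := by simp
        rw [e]
        linear_combination (((ρ g : SL2) : M2) 1 1 ^ 2) * hV00 -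
          (((φ g)⁻¹ : M2ˣ) : M2) 0 0 *
            (((ρ g : SL2) : M2) 0 0 * ((ρ g : SL2) : M2) 1 1 + 1) * hdet1
      intro g
      induction g using PresentedGroup.induction_on with
      | _ w =>
        induction w using FreeGroup.induction_on with
        | C1 =>
          refine ⟨?_, ?_, ?_, ?_⟩ <;>
            simp [_root_.map_one, Matrix.SpecialLinearGroup.coe_one, Units.val_one,
              Matrix.one_apply, Matrix.isDiag_one]
        | of x =>
          rcases x with i | u
          · have e : φ ((PresentedGroup.mk (seifertRels p₁ p₂ p₃ q₁ q₂ q₃))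
                (FreeGroup.of (Sum.inl i))) = f (Sum.inl i) := hφof _
            refine ⟨hdc i, ?_, ?_, ?_⟩ <;> rw [e] <;> simp [hf_def] <;> try exact rfl
          · have e : φ ((PresentedGroup.mk (seifertRels p₁ p₂ p₃ q₁ q₂ q₃))
                (FreeGroup.of (Sum.inr u))) = f (Sum.inr u) := hφof _
            refine ⟨hdh, ?_, ?_, ?_⟩ <;> rw [e]
            · simp [hf_def]
            · simp [hf_def]
            · rw [show f (Sum.inr u) = 1 from rfl, Units.val_one]
              have h1 : ((1 : M2)) 0 0 = 1 := by simp [Matrix.one_apply]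
              rw [h1]
              exact hη2.symm
        | inv_of x ih => exact step_inv _ ih
        | mul x y ihx ihy => exact step_mul _ _ ihx ihy
    refine ⟨fun g => !![0, ((φ g : M2ˣ) : M2) 0 1; 0, 0], ⟨?_, ?_⟩, ?_⟩
    · intro g
      simp [Matrix.trace_fin_two]
    · intro g₁ g₂
      obtain ⟨hd1, _, _, h00a⟩ := hinv g₁
      obtain ⟨_, _, h11b, _⟩ := hinv g₂
      have hz : ((φ (g₁ * g₂) : M2ˣ) : M2) 0 1 =
          ((ρ g₁ : SL2) : M2) 0 0 ^ 2 * ((φ g₂ : M2ˣ) : M2) 0 1 +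
            ((φ g₁ : M2ˣ) : M2) 0 1 := by
        rw [_root_.map_mul, Units.val_mul, Matrix.mul_apply, Fin.sum_univ_two, h00a, h11b]; ring
      have hconj : ((ρ g₁ : SL2) : M2) * !![(0 : ℂ), ((φ g₂ : M2ˣ) : M2) 0 1; 0, 0] *
          (((ρ g₁)⁻¹ : SL2) : M2) =
          !![(0 : ℂ), ((ρ g₁ : SL2) : M2) 0 0 ^ 2 * ((φ g₂ : M2ˣ) : M2) 0 1; 0, 0] := by
        rw [conj_entries _ hd1]
        ext r s
        fin_cases r <;> fin_cases s <;> simp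
      simp only
      rw [hconj, hz]
      ext r s
      fin_cases r <;> fin_cases s <;> simp [Matrix.add_apply] <;> try ring
    · rintro ⟨X, hXtr, hb⟩
      have hz2 : ((φ (cg 2) : M2ˣ) : M2) 0 1 = 0 := by
        rw [show φ (cg 2) = f (Sum.inl 2) from hφof _]
        simp [hf_def, hga_def]
      have hz0 : ((φ (cg 0) : M2ˣ) : M2) 0 1 = 1 := by
        rw [show φ (cg 0) = f (Sum.inl 0) from hφof _]
        simp [hf_def, hga_def]
      have hb2 := hb (cg 2)
      rw [conj_entries _ (hdc 2)] at hb2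
      have e2 := congrFun (congrFun hb2 0) 1
      simp only [Matrix.sub_apply] at e2
      simp [hz2] at e2
      have hX01 : X 0 1 = 0 := by
        have hx : X 0 1 * (1 - ((ρ (cg 2) : SL2) : M2) 0 0 ^ 2) = 0 := by
          linear_combination -e2
        rcases mul_eq_zero.mp hx with h | h
        · exact h
        · exact absurd (by linear_combination -h) (htne1 2)
      have hb0 := hb (cg 0)
      rw [conj_entries _ (hdc 0)] at hb0
      have e0 := congrFun (congrFun hb0 0) 1
      simp only [Matrix.sub_apply] at e0
      rw [hX01] at e0
      simp [hz0] at e0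


/-- Lemma 5.13 (with Lemma 5.10): for a diagonal representation `ρ` with `ρ(h)² = 1` of the
fundamental group of `M(S²; q₁/p₁, q₂/p₂, q₃/p₃)` with nonzero Euler number, every
`Ad ρ`-cocycle is a coboundary iff some `ρ(cᵢ)² = 1`. -/

theorem stmt_14 (p₁ p₂ p₃ q₁ q₂ q₃ : ℤ)
    (hp₁ : 1 ≤ p₁) (hp₂ : 1 ≤ p₂) (hp₃ : 1 ≤ p₃)
    (hD : q₁ * p₂ * p₃ + p₁ * q₂ * p₃ + p₁ * p₂ * q₃ ≠ 0)
    (ρ : PresentedGroup (seifertRels p₁ p₂ p₃ q₁ q₂ q₃) →*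
      Matrix.SpecialLinearGroup (Fin 2) ℂ)
    (hdiagh : Matrix.IsDiag
      ((ρ (PresentedGroup.of (Sum.inr ())) : Matrix.SpecialLinearGroup (Fin 2) ℂ) :
        Matrix (Fin 2) (Fin 2) ℂ))
    (hdiagc : ∀ i : Fin 3, Matrix.IsDiag
      ((ρ (PresentedGroup.of (Sum.inl i)) : Matrix.SpecialLinearGroup (Fin 2) ℂ) :
        Matrix (Fin 2) (Fin 2) ℂ))
    (hh : ρ (PresentedGroup.of (Sum.inr ())) ^ 2 = 1) :
    ((∃ i : Fin 3, ρ (PresentedGroup.of (Sum.inl i)) ^ 2 = 1) →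
      ∀ ε, IsAdCocycle ρ ε → IsAdCoboundary ρ ε) ∧
    ((∀ i : Fin 3, ρ (PresentedGroup.of (Sum.inl i)) ^ 2 ≠ 1) →
      ∃ ε, IsAdCocycle ρ ε ∧ ¬ IsAdCoboundary ρ ε) := by
  exact stmt14_main p₁ p₂ p₃ q₁ q₂ q₃ hp₁ hp₂ hp₃ hD ρ hdiagh hdiagc hh
end

section
/- Let p₁, p₂, p₃ ≥ 1 be integers and let ζ₁, ζ₂, ζ₃ ∈ ℂ satisfy ζᵢ^{pᵢ} = 1, ζᵢ ≠ 1, and ζᵢ ≠ −1 for i = 1, 2, 3. Then there exist matrices A, B in SL(2, ℂ) (Matrix.SpecialLinearGroup (Fin 2) ℂ) such that A^{p₁} = 1, B^{p₂} = 1, (A·B)^{p₃} = 1, trace A = ζ₁ + ζ₁⁻¹, trace B = ζ₂ + ζ₂⁻¹, and trace (A·B) = ζ₃ + ζ₃⁻¹. -/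
open Matrix

/-- Cayley–Hamilton for 2×2 matrices with determinant 1. -/
lemma sq_aux (a b c d : ℂ) (h : a * d - b * c = 1) :
    !![a, b; c, d] * !![a, b; c, d] = (a + d) • !![a, b; c, d] - 1 := by
  ext i j
  fin_cases i <;> fin_cases j <;>
    simp [Matrix.mul_apply, Fin.sum_univ_succ, Matrix.one_apply, Matrix.smul_apply] <;>
    first | ring1 | linear_combination -h

lemma sq_eq_smul_sub (M : Matrix (Fin 2) (Fin 2) ℂ) (hM : M.det = 1) :
    M * M = (M.trace) • M - 1 := by
  rw [Matrix.trace_fin_two, Matrix.eta_fin_two M]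
  exact sq_aux _ _ _ _ (by rw [Matrix.det_fin_two] at hM; linear_combination hM)

lemma pow_eq_one_of_trace (M : Matrix.SpecialLinearGroup (Fin 2) ℂ) (p : ℕ) (hp : 1 ≤ p)
    (ζ : ℂ) (hζp : ζ ^ p = 1) (hζ1 : ζ ≠ 1) (hζ2 : ζ ≠ -1)
    (ht : Matrix.trace (M : Matrix (Fin 2) (Fin 2) ℂ) = ζ + ζ⁻¹) : M ^ p = 1 := by
  have hζ0 : ζ ≠ 0 := by
    intro h; rw [h, zero_pow (by omega)] at hζp; exact zero_ne_one hζp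
  have hsq1 : ζ * ζ - 1 ≠ 0 := by
    have e : ζ * ζ - 1 = (ζ - 1) * (ζ + 1) := by ring
    rw [e]
    exact mul_ne_zero (sub_ne_zero.mpr hζ1) (fun h => hζ2 (by linear_combination h))
  have hδ : ζ - ζ⁻¹ ≠ 0 := by
    intro h
    apply hsq1
    field_simp at h
    linear_combination h
  set s : ℕ → ℂ := fun n => (ζ ^ n - ζ⁻¹ ^ n) / (ζ - ζ⁻¹) with hs
  set N : Matrix (Fin 2) (Fin 2) ℂ := (M : Matrix (Fin 2) (Fin 2) ℂ) with hN
  have hdet : N.det = 1 := M.2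
  have hsq : N * N = (ζ + ζ⁻¹) • N - 1 := by rw [sq_eq_smul_sub N hdet, ht]
  have key : ∀ n : ℕ, N ^ (n + 1) = s (n + 1) • N - s n • 1 := by
    intro n
    induction n with
    | zero => simp [hs, div_self hδ]
    | succ n ih =>
      have : N ^ (n + 2) = N * N ^ (n + 1) := by rw [← pow_succ']
      rw [this, ih, mul_sub, mul_smul_comm, mul_smul_comm, ← pow_two, sq, hsq, mul_one,
        smul_sub, smul_smul]
      have hrec : (ζ + ζ⁻¹) * s (n + 1) - s n = s (n + 2) := by
        apply mul_right_cancel₀ hδ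
        have c : ∀ k, s k * (ζ - ζ⁻¹) = ζ ^ k - ζ⁻¹ ^ k := fun k => div_mul_cancel₀ _ hδ
        rw [sub_mul, mul_assoc, c, c, c]
        have hz : ζ * ζ⁻¹ = 1 := mul_inv_cancel₀ hζ0
        simp only [pow_succ]
        linear_combination (ζ ^ n - ζ⁻¹ ^ n) * hz
      rw [← hrec]
      module
  have hζinv : ζ⁻¹ ^ p = 1 := by rw [inv_pow, hζp, inv_one]
  obtain ⟨m, rfl⟩ : ∃ m, p = m + 1 := ⟨p - 1, by omega⟩
  have hsp : s (m + 1) = 0 := by simp [hs, hζp, hζinv]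
  have hsm : s m = -1 := by
    have h1 : ζ ^ m = ζ⁻¹ := by
      field_simp
      calc ζ ^ m * ζ = ζ ^ (m + 1) := by ring
        _ = 1 := hζp
    have h2 : ζ⁻¹ ^ m = ζ := by
      have := inv_pow ζ m
      rw [this, h1]
      simp [hζ0]
    simp only [hs, h1, h2]
    rw [show (ζ⁻¹ - ζ) = -(ζ - ζ⁻¹) by ring, neg_div, div_self hδ]
  have hNp : N ^ (m + 1) = 1 := by
    rw [key m, hsp, hsm]; simp
  ext i j
  have := congrFun (congrFun hNp i) j
  simpa [Matrix.SpecialLinearGroup.coe_pow, hN] using this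

/-- Surjectivity of `T₊`: given roots of unity `ζᵢ ≠ ±1` with `ζᵢ^{pᵢ} = 1`, there exist
`A, B ∈ SL(2,ℂ)` with `A^{p₁} = B^{p₂} = (AB)^{p₃} = 1` and prescribed traces. -/
theorem stmt_16 (p₁ p₂ p₃ : ℕ) (hp₁ : 1 ≤ p₁) (hp₂ : 1 ≤ p₂) (hp₃ : 1 ≤ p₃)
    (ζ₁ ζ₂ ζ₃ : ℂ)
    (h₁ : ζ₁ ^ p₁ = 1) (h₁' : ζ₁ ≠ 1) (h₁'' : ζ₁ ≠ -1)
    (h₂ : ζ₂ ^ p₂ = 1) (h₂' : ζ₂ ≠ 1) (h₂'' : ζ₂ ≠ -1)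
    (h₃ : ζ₃ ^ p₃ = 1) (h₃' : ζ₃ ≠ 1) (h₃'' : ζ₃ ≠ -1) :
    ∃ A B : Matrix.SpecialLinearGroup (Fin 2) ℂ,
      A ^ p₁ = 1 ∧ B ^ p₂ = 1 ∧ (A * B) ^ p₃ = 1 ∧
      Matrix.trace (A : Matrix (Fin 2) (Fin 2) ℂ) = ζ₁ + ζ₁⁻¹ ∧
      Matrix.trace (B : Matrix (Fin 2) (Fin 2) ℂ) = ζ₂ + ζ₂⁻¹ ∧
      Matrix.trace ((A * B : Matrix.SpecialLinearGroup (Fin 2) ℂ) :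
        Matrix (Fin 2) (Fin 2) ℂ) = ζ₃ + ζ₃⁻¹ := by
  have hz1 : ζ₁ ≠ 0 := fun h => by rw [h, zero_pow (by omega)] at h₁; exact zero_ne_one h₁
  have hz2 : ζ₂ ≠ 0 := fun h => by rw [h, zero_pow (by omega)] at h₂; exact zero_ne_one h₂
  set x : ℂ := ζ₃ + ζ₃⁻¹ - ζ₁ * ζ₂ - ζ₁⁻¹ * ζ₂⁻¹ with hx
  refine ⟨⟨!![ζ₁, 1; 0, ζ₁⁻¹], by simp [Matrix.det_fin_two_of, hz1]⟩,
    ⟨!![ζ₂, 0; x, ζ₂⁻¹], by simp [Matrix.det_fin_two_of, hz2]⟩, ?_, ?_, ?_, ?_, ?_, ?_⟩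
  · exact pow_eq_one_of_trace _ p₁ hp₁ ζ₁ h₁ h₁' h₁'' (by simp [Matrix.trace_fin_two])
  · exact pow_eq_one_of_trace _ p₂ hp₂ ζ₂ h₂ h₂' h₂'' (by simp [Matrix.trace_fin_two])
  · refine pow_eq_one_of_trace _ p₃ hp₃ ζ₃ h₃ h₃' h₃'' ?_
    show Matrix.trace (!![ζ₁, 1; 0, ζ₁⁻¹] * !![ζ₂, 0; x, ζ₂⁻¹]) = _
    simp [Matrix.SpecialLinearGroup.coe_mul, Matrix.trace_fin_two, Matrix.mul_apply,
      Fin.sum_univ_succ, hx]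
    ring
  · simp [Matrix.trace_fin_two]
  · simp [Matrix.trace_fin_two]
  · show Matrix.trace (!![ζ₁, 1; 0, ζ₁⁻¹] * !![ζ₂, 0; x, ζ₂⁻¹]) = _
    simp [Matrix.SpecialLinearGroup.coe_mul, Matrix.trace_fin_two, Matrix.mul_apply,
      Fin.sum_univ_succ, hx]
    ring
end

section
/- Let p₁, p₂, p₃ ≥ 1 and q₁, q₂, q₃ be integers with D := q₁p₂p₃ + p₁q₂p₃ + p₁p₂q₃ ≠ 0. Let G be the presented group with generators c₁, c₂, c₃, h and relators cᵢ·h·cᵢ⁻¹·h⁻¹ (i = 1, 2, 3), cᵢ^{pᵢ}·h^{qᵢ} (i = 1, 2, 3), and c₁c₂c₃. Let ρ : G →* SL(2, ℂ) be a homomorphism such that ρ(h) and all ρ(cᵢ) are diagonal matrices and ρ(h) ≠ 1, ρ(h) ≠ −1. Then every Ad ρ-cocycle is an Ad ρ-coboundary. -/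
private lemma isDiag_mul₂ {A B : Matrix (Fin 2) (Fin 2) ℂ} (hA : A.IsDiag) (hB : B.IsDiag) :
    (A * B).IsDiag := by
  intro i j hij
  rw [Matrix.mul_apply]
  refine Finset.sum_eq_zero fun k _ => ?_
  rcases eq_or_ne k i with rfl | hk
  · rw [hB hij, mul_zero]
  · rw [hA (Ne.symm hk), zero_mul]

private lemma isDiag_pow₂ {A : Matrix (Fin 2) (Fin 2) ℂ} (hA : A.IsDiag) (n : ℕ) :
    (A ^ n).IsDiag := by
  induction n with
  | zero => simpa using Matrix.isDiag_one
  | succ n ih => rw [pow_succ]; exact isDiag_mul₂ ih hA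

private lemma diag_inv_coe (A : Matrix.SpecialLinearGroup (Fin 2) ℂ)
    (h : (A : Matrix (Fin 2) (Fin 2) ℂ).IsDiag) :
    ((A⁻¹ : Matrix.SpecialLinearGroup (Fin 2) ℂ) : Matrix (Fin 2) (Fin 2) ℂ) =
      !![(A : Matrix (Fin 2) (Fin 2) ℂ) 1 1, 0; 0, (A : Matrix (Fin 2) (Fin 2) ℂ) 0 0] := by
  rw [Matrix.SpecialLinearGroup.coe_inv, Matrix.adjugate_fin_two,
    h (show (0:Fin 2) ≠ 1 by decide), h (show (1:Fin 2) ≠ 0 by decide)]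
  norm_num

private lemma conj_diag (A E : Matrix (Fin 2) (Fin 2) ℂ)
    (h01 : A 0 1 = 0) (h10 : A 1 0 = 0) (hdet : A 0 0 * A 1 1 = 1) :
    A * E * !![A 1 1, 0; 0, A 0 0] =
      !![E 0 0, A 0 0 ^ 2 * E 0 1; A 1 1 ^ 2 * E 1 0, E 1 1] := by
  ext i j
  fin_cases i <;> fin_cases j <;>
    simp [Matrix.mul_apply, Fin.sum_univ_two, h01, h10] <;>
    first | linear_combination (E 0 0) * hdet | linear_combination (E 1 1) * hdet | linear_combination (E 0 0 + E 1 1) * hdet | ring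




/-- Lemma 5.12: for a diagonal representation `ρ` with `ρ(h) ≠ ±I` of the fundamental
group of `M(S²; q₁/p₁, q₂/p₂, q₃/p₃)` with nonzero Euler number, every `Ad ρ`-cocycle is a
coboundary. -/
theorem stmt_19 (p₁ p₂ p₃ q₁ q₂ q₃ : ℤ)
    (hp₁ : 1 ≤ p₁) (hp₂ : 1 ≤ p₂) (hp₃ : 1 ≤ p₃)
    (hD : q₁ * p₂ * p₃ + p₁ * q₂ * p₃ + p₁ * p₂ * q₃ ≠ 0)
    (ρ : PresentedGroup (seifertRels p₁ p₂ p₃ q₁ q₂ q₃) →*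
      Matrix.SpecialLinearGroup (Fin 2) ℂ)
    (hdiagh : Matrix.IsDiag
      ((ρ (PresentedGroup.of (Sum.inr ())) : Matrix.SpecialLinearGroup (Fin 2) ℂ) :
        Matrix (Fin 2) (Fin 2) ℂ))
    (hdiagc : ∀ i : Fin 3, Matrix.IsDiag
      ((ρ (PresentedGroup.of (Sum.inl i)) : Matrix.SpecialLinearGroup (Fin 2) ℂ) :
        Matrix (Fin 2) (Fin 2) ℂ))
    (hh1 : ((ρ (PresentedGroup.of (Sum.inr ())) : Matrix.SpecialLinearGroup (Fin 2) ℂ) :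
        Matrix (Fin 2) (Fin 2) ℂ) ≠ 1)
    (hh2 : ((ρ (PresentedGroup.of (Sum.inr ())) : Matrix.SpecialLinearGroup (Fin 2) ℂ) :
        Matrix (Fin 2) (Fin 2) ℂ) ≠ -1) :
    ∀ ε, IsAdCocycle ρ ε → IsAdCoboundary ρ ε := by
  intro ε hε
  obtain ⟨htr, hcoc⟩ := hε
  classical
  -- abbreviations
  let Γ := PresentedGroup (seifertRels p₁ p₂ p₃ q₁ q₂ q₃)
  let A : Γ → Matrix (Fin 2) (Fin 2) ℂ := fun g => (ρ g : Matrix (Fin 2) (Fin 2) ℂ)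
  let B : Γ → Matrix (Fin 2) (Fin 2) ℂ := fun g =>
    (((ρ g)⁻¹ : Matrix.SpecialLinearGroup (Fin 2) ℂ) : Matrix (Fin 2) (Fin 2) ℂ)
  let w : Γ := PresentedGroup.of (Sum.inr ())
  let c : Fin 3 → Γ := fun i => PresentedGroup.of (Sum.inl i)
  have hdh : (A w).IsDiag := hdiagh
  have hdc : ∀ i, (A (c i)).IsDiag := hdiagc
  -- interface lemmas
  have hAB : ∀ g, A g * B g = 1 := fun g => by
    show ((ρ g : Matrix (Fin 2) (Fin 2) ℂ) * _ = 1)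
    rw [← Matrix.SpecialLinearGroup.coe_mul, mul_inv_cancel,
      Matrix.SpecialLinearGroup.coe_one]
  have hBA : ∀ g, B g * A g = 1 := fun g => by
    show (_ * (ρ g : Matrix (Fin 2) (Fin 2) ℂ) = 1)
    rw [← Matrix.SpecialLinearGroup.coe_mul, inv_mul_cancel,
      Matrix.SpecialLinearGroup.coe_one]
  have hAmul : ∀ g₁ g₂, A (g₁ * g₂) = A g₁ * A g₂ := fun g₁ g₂ => by
    show ((ρ (g₁ * g₂) : Matrix (Fin 2) (Fin 2) ℂ) = _)
    rw [map_mul, Matrix.SpecialLinearGroup.coe_mul]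
  have hBmul : ∀ g₁ g₂, B (g₁ * g₂) = B g₂ * B g₁ := fun g₁ g₂ => by
    show (((ρ (g₁ * g₂))⁻¹ : Matrix.SpecialLinearGroup (Fin 2) ℂ) :
      Matrix (Fin 2) (Fin 2) ℂ) = _
    rw [map_mul, mul_inv_rev, Matrix.SpecialLinearGroup.coe_mul]
  have hAinv : ∀ g : Γ, A g⁻¹ = B g := fun g => by
    show ((ρ g⁻¹ : Matrix (Fin 2) (Fin 2) ℂ)) = _
    rw [map_inv]
  have hBinv : ∀ g : Γ, B g⁻¹ = A g := fun g => by
    show (((ρ g⁻¹)⁻¹ : Matrix.SpecialLinearGroup (Fin 2) ℂ) :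
      Matrix (Fin 2) (Fin 2) ℂ) = _
    rw [map_inv, inv_inv]
  have hA1 : A 1 = 1 := by
    show ((ρ 1 : Matrix (Fin 2) (Fin 2) ℂ)) = 1
    rw [map_one, Matrix.SpecialLinearGroup.coe_one]
  have hB1 : B 1 = 1 := by
    show (((ρ 1)⁻¹ : Matrix.SpecialLinearGroup (Fin 2) ℂ) :
      Matrix (Fin 2) (Fin 2) ℂ) = 1
    rw [map_one, inv_one, Matrix.SpecialLinearGroup.coe_one]
  have hcoc' : ∀ g₁ g₂, ε (g₁ * g₂) = ε g₁ + A g₁ * ε g₂ * B g₁ := hcoc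
  have hdetA : ∀ g, (A g).IsDiag → A g 0 0 * A g 1 1 = 1 := fun g hg => by
    have hd := (ρ g).prop
    rw [Matrix.det_fin_two] at hd
    have h01 : A g 0 1 = 0 := hg (show (0:Fin 2) ≠ 1 by decide)
    rw [show ((ρ g : Matrix (Fin 2) (Fin 2) ℂ)) 0 1 = A g 0 1 from rfl, h01] at hd
    linear_combination hd
  have hBdiag : ∀ g, (A g).IsDiag → B g = !![A g 1 1, 0; 0, A g 0 0] := fun g hg =>
    diag_inv_coe (ρ g) hg
  have hBisDiag : ∀ g, (A g).IsDiag → (B g).IsDiag := fun g hg => by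
    rw [hBdiag g hg]
    intro i j hij
    fin_cases i <;> fin_cases j <;> simp_all
  -- entrywise cocycle relations
  have coc00 : ∀ g₁ g₂, (A g₁).IsDiag → ε (g₁ * g₂) 0 0 = ε g₁ 0 0 + ε g₂ 0 0 := by
    intro g₁ g₂ hg
    rw [hcoc' g₁ g₂, hBdiag g₁ hg,
      conj_diag (A g₁) (ε g₂) (hg (by decide)) (hg (by decide)) (hdetA g₁ hg)]
    simp
  have coc01 : ∀ g₁ g₂, (A g₁).IsDiag →
      ε (g₁ * g₂) 0 1 = ε g₁ 0 1 + A g₁ 0 0 ^ 2 * ε g₂ 0 1 := by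
    intro g₁ g₂ hg
    rw [hcoc' g₁ g₂, hBdiag g₁ hg,
      conj_diag (A g₁) (ε g₂) (hg (by decide)) (hg (by decide)) (hdetA g₁ hg)]
    simp
  have coc10 : ∀ g₁ g₂, (A g₁).IsDiag →
      ε (g₁ * g₂) 1 0 = ε g₁ 1 0 + A g₁ 1 1 ^ 2 * ε g₂ 1 0 := by
    intro g₁ g₂ hg
    rw [hcoc' g₁ g₂, hBdiag g₁ hg,
      conj_diag (A g₁) (ε g₂) (hg (by decide)) (hg (by decide)) (hdetA g₁ hg)]
    simp
  have e1 : ε 1 = 0 := by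
    have h11 := hcoc' 1 1
    rw [one_mul, hA1, hB1, one_mul, mul_one] at h11
    have := left_eq_add.mp h11
    exact this
  have inv00 : ∀ g : Γ, (A g).IsDiag → ε g⁻¹ 0 0 = -(ε g 0 0) := by
    intro g hg
    have hinv : (A g⁻¹).IsDiag := by rw [hAinv g]; exact hBisDiag g hg
    have h0 := coc00 g⁻¹ g hinv
    rw [inv_mul_cancel, e1] at h0
    simp only [Matrix.zero_apply] at h0
    linear_combination -h0
  have diagpow : ∀ g : Γ, (A g).IsDiag → ∀ n : ℕ, (A (g ^ n)).IsDiag := by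
    intro g hg n
    have hAp : A (g ^ n) = (A g) ^ n := by
      show ((ρ (g ^ n) : Matrix (Fin 2) (Fin 2) ℂ)) = _
      rw [map_pow, Matrix.SpecialLinearGroup.coe_pow]
    rw [hAp]
    exact isDiag_pow₂ hg n
  have pow00 : ∀ g : Γ, (A g).IsDiag → ∀ n : ℕ, ε (g ^ n) 0 0 = n * ε g 0 0 := by
    intro g hg n
    induction n with
    | zero => simp [pow_zero, e1]
    | succ n ih =>
      rw [pow_succ, coc00 _ _ (diagpow g hg n), ih]
      push_cast
      ring
  have zpow00 : ∀ g : Γ, (A g).IsDiag → ∀ q : ℤ, ε (g ^ q) 0 0 = q * ε g 0 0 := by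
    intro g hg q
    cases q with
    | ofNat n =>
      rw [Int.ofNat_eq_coe, zpow_natCast, pow00 g hg n]
      push_cast; ring
    | negSucc n =>
      rw [zpow_negSucc, inv00 _ (diagpow g hg (n + 1)), pow00 g hg (n + 1)]
      push_cast; ring
  have diagzpow : ∀ g : Γ, (A g).IsDiag → ∀ q : ℤ, (A (g ^ q)).IsDiag := by
    intro g hg q
    cases q with
    | ofNat n => rw [Int.ofNat_eq_coe, zpow_natCast]; exact diagpow g hg n
    | negSucc n =>
      rw [zpow_negSucc, hAinv]
      exact hBisDiag _ (diagpow g hg (n + 1))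
  -- relations in the presented group
  have relone : ∀ r ∈ seifertRels p₁ p₂ p₃ q₁ q₂ q₃,
      PresentedGroup.mk (seifertRels p₁ p₂ p₃ q₁ q₂ q₃) r = 1 :=
    fun r hr => (QuotientGroup.eq_one_iff r).mpr (Subgroup.subset_normalClosure hr)
  have hcomm : ∀ i : Fin 3, c i * w = w * c i := by
    intro i
    rw [← commutatorElement_eq_one_iff_mul_comm]
    fin_cases i
    · have h0 := relone (FreeGroup.of (Sum.inl 0) * FreeGroup.of (Sum.inr ()) *
        (FreeGroup.of (Sum.inl 0))⁻¹ * (FreeGroup.of (Sum.inr ()))⁻¹)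
        (by unfold seifertRels; exact Set.mem_insert _ _)
      simpa [c, w, commutatorElement_def, map_mul, map_inv, PresentedGroup.of] using h0
    · have h0 := relone (FreeGroup.of (Sum.inl 1) * FreeGroup.of (Sum.inr ()) *
        (FreeGroup.of (Sum.inl 1))⁻¹ * (FreeGroup.of (Sum.inr ()))⁻¹)
        (by unfold seifertRels; exact Set.mem_insert_of_mem _ (Set.mem_insert _ _))
      simpa [c, w, commutatorElement_def, map_mul, map_inv, PresentedGroup.of] using h0
    · have h0 := relone (FreeGroup.of (Sum.inl 2) * FreeGroup.of (Sum.inr ()) *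
        (FreeGroup.of (Sum.inl 2))⁻¹ * (FreeGroup.of (Sum.inr ()))⁻¹)
        (by unfold seifertRels; exact Set.mem_insert_of_mem _ (Set.mem_insert_of_mem _ (Set.mem_insert _ _)))
      simpa [c, w, commutatorElement_def, map_mul, map_inv, PresentedGroup.of] using h0
  have hrel2₁ : c 0 ^ p₁ * w ^ q₁ = 1 := by
    have h0 := relone (FreeGroup.of (Sum.inl 0) ^ p₁ * FreeGroup.of (Sum.inr ()) ^ q₁)
      (by unfold seifertRels; exact Set.mem_insert_of_mem _ (Set.mem_insert_of_mem _ (Set.mem_insert_of_mem _ (Set.mem_insert _ _))))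
    simpa [c, w, map_mul, map_zpow, PresentedGroup.of] using h0
  have hrel2₂ : c 1 ^ p₂ * w ^ q₂ = 1 := by
    have h0 := relone (FreeGroup.of (Sum.inl 1) ^ p₂ * FreeGroup.of (Sum.inr ()) ^ q₂)
      (by unfold seifertRels; exact Set.mem_insert_of_mem _ (Set.mem_insert_of_mem _ (Set.mem_insert_of_mem _ (Set.mem_insert_of_mem _ (Set.mem_insert _ _)))))
    simpa [c, w, map_mul, map_zpow, PresentedGroup.of] using h0
  have hrel2₃ : c 2 ^ p₃ * w ^ q₃ = 1 := by
    have h0 := relone (FreeGroup.of (Sum.inl 2) ^ p₃ * FreeGroup.of (Sum.inr ()) ^ q₃)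
      (by unfold seifertRels; exact Set.mem_insert_of_mem _ (Set.mem_insert_of_mem _ (Set.mem_insert_of_mem _ (Set.mem_insert_of_mem _ (Set.mem_insert_of_mem _ (Set.mem_insert _ _))))))
    simpa [c, w, map_mul, map_zpow, PresentedGroup.of] using h0
  have hrel3 : c 0 * c 1 * c 2 = 1 := by
    have h0 := relone (FreeGroup.of (Sum.inl 0) * FreeGroup.of (Sum.inl 1) *
      FreeGroup.of (Sum.inl 2)) (by unfold seifertRels; exact Set.mem_insert_of_mem _ (Set.mem_insert_of_mem _ (Set.mem_insert_of_mem _ (Set.mem_insert_of_mem _ (Set.mem_insert_of_mem _ (Set.mem_insert_of_mem _ (Set.mem_singleton _)))))))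
    simpa [c, map_mul, PresentedGroup.of] using h0
  -- the diagonal part vanishes
  have hpq : ∀ (i : Fin 3) (p q : ℤ), c i ^ p * w ^ q = 1 →
      (p : ℂ) * ε (c i) 0 0 + (q : ℂ) * ε w 0 0 = 0 := by
    intro i p q hrel
    have h0 := coc00 (c i ^ p) (w ^ q) (diagzpow _ (hdc i) p)
    rw [hrel, e1, zpow00 _ (hdc i) p, zpow00 _ hdh q] at h0
    simp only [Matrix.zero_apply] at h0
    linear_combination -h0
  have hsum : ε (c 0) 0 0 + ε (c 1) 0 0 + ε (c 2) 0 0 = 0 := by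
    have hd01 : (A (c 0 * c 1)).IsDiag := by
      rw [hAmul]; exact isDiag_mul₂ (hdc 0) (hdc 1)
    have h0 := coc00 (c 0 * c 1) (c 2) hd01
    rw [hrel3, e1, coc00 (c 0) (c 1) (hdc 0)] at h0
    simp only [Matrix.zero_apply] at h0
    linear_combination -h0
  have hτ : ε w 0 0 = 0 := by
    have e0 := hpq 0 p₁ q₁ hrel2₁
    have e1' := hpq 1 p₂ q₂ hrel2₂
    have e2 := hpq 2 p₃ q₃ hrel2₃
    have hDC : ((q₁ * p₂ * p₃ + p₁ * q₂ * p₃ + p₁ * p₂ * q₃ : ℤ) : ℂ) ≠ 0 :=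
      Int.cast_ne_zero.mpr hD
    have key : ((q₁ * p₂ * p₃ + p₁ * q₂ * p₃ + p₁ * p₂ * q₃ : ℤ) : ℂ) * ε w 0 0 = 0 := by
      push_cast
      linear_combination (p₂ : ℂ) * p₃ * e0 + (p₁ : ℂ) * p₃ * e1' +
        (p₁ : ℂ) * p₂ * e2 - ((p₁ : ℂ) * p₂ * p₃) * hsum
    exact (mul_eq_zero.mp key).resolve_left hDC
  have ht : ∀ i : Fin 3, ε (c i) 0 0 = 0 := by
    intro i
    fin_cases i
    · have h0 := hpq 0 p₁ q₁ hrel2₁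
      rw [hτ, mul_zero, add_zero, mul_eq_zero] at h0
      exact h0.resolve_left (Int.cast_ne_zero.mpr (by omega))
    · have h0 := hpq 1 p₂ q₂ hrel2₂
      rw [hτ, mul_zero, add_zero, mul_eq_zero] at h0
      exact h0.resolve_left (Int.cast_ne_zero.mpr (by omega))
    · have h0 := hpq 2 p₃ q₃ hrel2₃
      rw [hτ, mul_zero, add_zero, mul_eq_zero] at h0
      exact h0.resolve_left (Int.cast_ne_zero.mpr (by omega))
  -- m² ≠ 1
  have hdetw := hdetA w hdh
  have hm2 : A w 0 0 ^ 2 ≠ 1 := by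
    intro hsq
    have hfac : (A w 0 0 - 1) * (A w 0 0 + 1) = 0 := by linear_combination hsq
    rcases mul_eq_zero.mp hfac with h' | h'
    · apply hh1
      have hm1 : A w 0 0 = 1 := by linear_combination h'
      have hm'1 : A w 1 1 = 1 := by linear_combination hdetw - A w 1 1 * hm1
      ext i j
      fin_cases i <;> fin_cases j
      · simpa [Matrix.one_apply] using hm1
      · simpa using hdh (show (0:Fin 2) ≠ 1 by decide)
      · simpa using hdh (show (1:Fin 2) ≠ 0 by decide)
      · simpa [Matrix.one_apply] using hm'1
    · apply hh2
      have hm1 : A w 0 0 = -1 := by linear_combination h'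
      have hm'1 : A w 1 1 = -1 := by linear_combination A w 1 1 * hm1 - hdetw
      ext i j
      fin_cases i <;> fin_cases j
      · simpa [Matrix.one_apply] using hm1
      · simpa using hdh (show (0:Fin 2) ≠ 1 by decide)
      · simpa using hdh (show (1:Fin 2) ≠ 0 by decide)
      · simpa [Matrix.one_apply] using hm'1
  have hm'2 : A w 1 1 ^ 2 ≠ 1 := by
    intro hsq
    apply hm2
    linear_combination (A w 0 0 * A w 1 1 + 1) * hdetw - A w 0 0 ^ 2 * hsq
  have hm2' : (1 : ℂ) - A w 0 0 ^ 2 ≠ 0 := sub_ne_zero.mpr (Ne.symm hm2)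
  have hm'2' : (1 : ℂ) - A w 1 1 ^ 2 ≠ 0 := sub_ne_zero.mpr (Ne.symm hm'2)
  -- off-diagonal parts at the generators
  have hu : ∀ i : Fin 3, ε (c i) 0 1 * (1 - A w 0 0 ^ 2) =
      ε w 0 1 * (1 - A (c i) 0 0 ^ 2) := by
    intro i
    have h1 := coc01 (c i) w (hdc i)
    have h2 := coc01 w (c i) hdh
    rw [hcomm i] at h1
    linear_combination h2 - h1
  have hl : ∀ i : Fin 3, ε (c i) 1 0 * (1 - A w 1 1 ^ 2) =
      ε w 1 0 * (1 - A (c i) 1 1 ^ 2) := by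
    intro i
    have h1 := coc10 (c i) w (hdc i)
    have h2 := coc10 w (c i) hdh
    rw [hcomm i] at h1
    linear_combination h2 - h1
  -- the coboundary matrix
  set y : ℂ := ε w 0 1 / (1 - A w 0 0 ^ 2) with hy
  set z : ℂ := ε w 1 0 / (1 - A w 1 1 ^ 2) with hz
  let X : Matrix (Fin 2) (Fin 2) ℂ := !![0, y; z, 0]
  let S : Subgroup Γ :=
    { carrier := {g | ε g = X - A g * X * B g}
      one_mem' := by
        show ε 1 = X - A 1 * X * B 1
        rw [e1, hA1, hB1, one_mul, mul_one, sub_self]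
      mul_mem' := by
        intro a b ha hb
        simp only [Set.mem_setOf_eq] at ha hb ⊢
        rw [hcoc' a b, ha, hb, hAmul, hBmul]
        noncomm_ring
      inv_mem' := by
        intro a ha
        simp only [Set.mem_setOf_eq] at ha ⊢
        have h0 := hcoc' a⁻¹ a
        rw [inv_mul_cancel, e1, hAinv, hBinv, ha] at h0
        have expand : B a * (X - A a * X * B a) * A a
            = B a * X * A a - (B a * A a) * X * (B a * A a) := by noncomm_ring
        rw [expand, hBA, one_mul, mul_one] at h0
        rw [hAinv, hBinv]
        have h1 : ε a⁻¹ = -(B a * X * A a - X) := by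
          rw [eq_neg_iff_add_eq_zero]
          exact h0.symm
        rw [h1]
        abel }
  have main : ∀ g : Γ, (A g).IsDiag → ε g 0 0 = 0 →
      ε g 0 1 = y * (1 - A g 0 0 ^ 2) → ε g 1 0 = z * (1 - A g 1 1 ^ 2) → g ∈ S := by
    intro g hg h00 h01 h10
    show ε g = X - A g * X * B g
    rw [hBdiag g hg,
      conj_diag (A g) X (hg (by decide)) (hg (by decide)) (hdetA g hg)]
    have h11 : ε g 1 1 = 0 := by
      have := htr g
      rw [Matrix.trace_fin_two] at this
      linear_combination this - h00
    ext i j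
    fin_cases i <;> fin_cases j
    · simpa using h00
    · show ε g 0 1 = (X - _) 0 1
      rw [h01]
      simp [X]
      ring
    · show ε g 1 0 = (X - _) 1 0
      rw [h10]
      simp [X]
      ring
    · simpa using h11
  have hgen : ∀ j : Fin 3 ⊕ Unit, PresentedGroup.of j ∈ S := by
    intro j
    rcases j with i | u
    · refine main (c i) (hdc i) (ht i) ?_ ?_
      · rw [hy, div_mul_eq_mul_div, eq_div_iff hm2']
        linear_combination hu i
      · rw [hz, div_mul_eq_mul_div, eq_div_iff hm'2']
        linear_combination hl i
    · refine main w hdh hτ ?_ ?_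
      · rw [hy, div_mul_eq_mul_div, eq_div_iff hm2']
      · rw [hz, div_mul_eq_mul_div, eq_div_iff hm'2']
  refine ⟨X, by simp [X, Matrix.trace_fin_two], fun g => ?_⟩
  exact PresentedGroup.generated_by _ S hgen g
end
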